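/- arXiv:1804.07992 — 11 statements merged into one kernel-verified Lean document; each statement's English description precedes it below -/
import Mathlib

section
/- Let X be a normed space, p ≥ 1, and let g : ℝ → X be strongly measurable with ‖g(·)‖^p locally integrable. Fix α > 0, h > 0, τ ∈ ℝ and M ≥ 0. If g is pullback translation bounded with bound M, i.e. ∫_{s−h}^{s} ‖g(r)‖^p dr ≤ M for every s ≤ τ, then g is pullback tempered; more precisely, for every s ≤ τ one has ∫_{−∞}^{s} e^{α(r−s)} ‖g(r)‖^p dr ≤ M/(1 − e^{−αh}) < ∞. -/
/-!
Cut `(-∞, s]` into the windows `(s - (n+1)h, s - nh]`. On the `n`-th window the weight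
`e^{α(r-s)}` is at most `e^{-αhn}` and the mass of `‖g‖^p` is at most `M`, so the weighted integral
is dominated by the geometric series `M ∑ e^{-αhn} = M / (1 - e^{-αh})`.
-/

open MeasureTheory

open Set in
theorem Set.Iic_eq_iUnion_Ioc_sub_mul {h : ℝ} (hh : 0 < h) (s : ℝ) :
    Iic s = ⋃ n : ℕ, Ioc (s - (n + 1) * h) (s - n * h) := by
  refine Subset.antisymm (fun r hr => mem_iUnion.2 ⟨⌊(s - r) / h⌋₊, ?_, ?_⟩) ?_
  · have hlt := Nat.lt_floor_add_one ((s - r) / h)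
    rw [div_lt_iff₀ hh] at hlt
    linarith
  · have hle := Nat.floor_le (div_nonneg (sub_nonneg.2 hr) hh.le)
    rw [le_div_iff₀ hh] at hle
    linarith
  · exact iUnion_subset fun n r hr => hr.2.trans (by simp only [sub_le_self_iff]; positivity)

theorem Set.pairwise_disjoint_Ioc_sub_mul {h : ℝ} (hh : 0 < h) (s : ℝ) :
    Pairwise (Function.onFun Disjoint fun n : ℕ => Set.Ioc (s - (n + 1) * h) (s - n * h)) := by
  have hanti : Antitone fun n : ℕ => s - n * h := fun m n hmn => by
    simp only [sub_le_sub_iff_left]; gcongr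
  simpa [Order.succ_eq_add_one] using hanti.pairwise_disjoint_on_Ioc_succ

theorem lintegral_Iic_eq_tsum_Ioc (μ : Measure ℝ) (f : ℝ → ENNReal) {h : ℝ} (hh : 0 < h) (s : ℝ) :
    ∫⁻ r in Set.Iic s, f r ∂μ = ∑' n : ℕ, ∫⁻ r in Set.Ioc (s - (n + 1) * h) (s - n * h), f r ∂μ := by
  rw [Set.Iic_eq_iUnion_Ioc_sub_mul hh s,
    lintegral_iUnion (fun _ => measurableSet_Ioc) (Set.pairwise_disjoint_Ioc_sub_mul hh s)]

theorem setLIntegral_Ioc_exp_mul_le (μ : Measure ℝ) (f : ℝ → ℝ) {α : ℝ} (hα : 0 ≤ α) (a b s : ℝ) :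
    ∫⁻ r in Set.Ioc a b, ENNReal.ofReal (Real.exp (α * (r - s)) * f r) ∂μ
      ≤ ENNReal.ofReal (Real.exp (α * (b - s))) * ∫⁻ r in Set.Ioc a b, ENNReal.ofReal (f r) ∂μ := by
  rw [← lintegral_const_mul' _ _ ENNReal.ofReal_ne_top]
  refine setLIntegral_mono' measurableSet_Ioc fun r hr => ?_
  rw [ENNReal.ofReal_mul (Real.exp_pos _).le]
  gcongr
  exact hr.2

theorem ENNReal.tsum_ofReal_pow_mul_ofReal {c : ℝ} (hc₀ : 0 ≤ c) (hc₁ : c < 1) (M : ℝ) :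
    ∑' n : ℕ, ENNReal.ofReal c ^ n * ENNReal.ofReal M = ENNReal.ofReal (M / (1 - c)) := by
  rw [ENNReal.tsum_mul_right, ENNReal.tsum_geometric, ENNReal.ofReal_div_of_pos (by linarith),
    ENNReal.ofReal_sub 1 hc₀, ENNReal.ofReal_one, div_eq_mul_inv, mul_comm]

theorem lintegral_Iic_exp_mul_le_of_forall_Ioc_le (μ : Measure ℝ) (f : ℝ → ℝ) {α h M s : ℝ}
    (hα : 0 < α) (hh : 0 < h)
    (hwin : ∀ t ≤ s, ∫⁻ r in Set.Ioc (t - h) t, ENNReal.ofReal (f r) ∂μ ≤ ENNReal.ofReal M) :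
    ∫⁻ r in Set.Iic s, ENNReal.ofReal (Real.exp (α * (r - s)) * f r) ∂μ
      ≤ ENNReal.ofReal (M / (1 - Real.exp (-α * h))) := by
  have hc₁ : Real.exp (-α * h) < 1 := Real.exp_lt_one_iff.2 (by nlinarith)
  rw [lintegral_Iic_eq_tsum_Ioc μ _ hh s,
    ← ENNReal.tsum_ofReal_pow_mul_ofReal (Real.exp_pos _).le hc₁ M]
  refine ENNReal.tsum_le_tsum fun n => ?_
  have hweight : Real.exp (α * (s - n * h - s)) = Real.exp (-α * h) ^ n := by
    rw [← Real.exp_nat_mul]; ring_nf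
  have hwindow : s - (n + 1) * h = (s - n * h) - h := by ring
  calc _ ≤ ENNReal.ofReal (Real.exp (α * (s - n * h - s))) *
          ∫⁻ r in Set.Ioc (s - (n + 1) * h) (s - n * h), ENNReal.ofReal (f r) ∂μ :=
        setLIntegral_Ioc_exp_mul_le μ f hα.le _ _ s
    _ ≤ _ := by
      rw [hweight, ENNReal.ofReal_pow (Real.exp_pos _).le, hwindow]
      gcongr
      exact hwin _ (by simp only [sub_le_self_iff]; positivity)

theorem pullback_translation_bounded_implies_pullback_tempered_general
    {X : Type*} [NormedAddCommGroup X]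
    (p : ℝ) (g : ℝ → X)
    (α h τ M : ℝ) (hα : 0 < α) (hh : 0 < h)
    (htb : ∀ s ≤ τ,
      ∫⁻ r in Set.Ioc (s - h) s, ENNReal.ofReal (‖g r‖ ^ p) ≤ ENNReal.ofReal M) :
    ∀ s ≤ τ,
      (∫⁻ r in Set.Iic s, ENNReal.ofReal (Real.exp (α * (r - s)) * ‖g r‖ ^ p))
          ≤ ENNReal.ofReal (M / (1 - Real.exp (-α * h))) ∧
      ENNReal.ofReal (M / (1 - Real.exp (-α * h))) < ⊤ :=
  fun s hs => ⟨lintegral_Iic_exp_mul_le_of_forall_Ioc_le volume _ hα hh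
    fun t ht => htb t (ht.trans hs), ENNReal.ofReal_lt_top⟩

/-- If `g` is pullback translation bounded with bound `M` (relative to final time `τ`
and window `h`), then it is pullback tempered with rate `α`: for every `s ≤ τ`,
`∫_{-∞}^{s} e^{α(r-s)} ‖g r‖^p dr ≤ M / (1 - e^{-αh}) < ∞`. -/
theorem pullback_translation_bounded_implies_pullback_tempered
    {X : Type*} [NormedAddCommGroup X]
    (p : ℝ) (hp : 1 ≤ p) (g : ℝ → X)
    (hg : StronglyMeasurable g)
    (hloc : LocallyIntegrable (fun r => ‖g r‖ ^ p) volume)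
    (α h τ M : ℝ) (hα : 0 < α) (hh : 0 < h) (hM : 0 ≤ M)
    (htb : ∀ s ≤ τ,
      ∫⁻ r in Set.Ioc (s - h) s, ENNReal.ofReal (‖g r‖ ^ p) ≤ ENNReal.ofReal M) :
    ∀ s ≤ τ,
      (∫⁻ r in Set.Iic s, ENNReal.ofReal (Real.exp (α * (r - s)) * ‖g r‖ ^ p))
          ≤ ENNReal.ofReal (M / (1 - Real.exp (-α * h))) ∧
      ENNReal.ofReal (M / (1 - Real.exp (-α * h))) < ⊤ :=
  pullback_translation_bounded_implies_pullback_tempered_general p g α h τ M hα hh htb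
end

section
/- Let X be a Banach space, U a process on X, and D a universe in X. Suppose U satisfies the pullback D-condition (MWZ): for every family D̂ = {D(t)} ∈ D, every t ∈ ℝ and every ε > 0, there exist a time τ_ε ≤ t, a finite-dimensional subspace X₁ ⊆ X and a bounded linear projection P : X → X with range contained in X₁, such that the set P(⋃_{s ≤ τ_ε} U(t,s)D(s)) is bounded and ‖x − Px‖ ≤ ε for every x ∈ ⋃_{s ≤ τ_ε} U(t,s)D(s). Then U is pullback D-asymptotically compact: for every D̂ ∈ D, every t ∈ ℝ and all sequences τ_n ≤ t with τ_n → −∞ and x_n ∈ D(τ_n), the sequence (U(t,τ_n)x_n)_n has a convergent subsequence in X. -/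
open Filter Topology

/-- In a Banach space, the pullback `𝒟`-condition (MWZ) implies pullback
`𝒟`-asymptotic compactness of the process `U`. -/
theorem MWZ_condition_implies_pullback_asymptotically_compact
    {X : Type*} [NormedAddCommGroup X] [NormedSpace ℝ X] [CompleteSpace X]
    (U : ℝ → ℝ → X → X)
    (hid : ∀ τ : ℝ, ∀ x : X, U τ τ x = x)
    (hcomp : ∀ ⦃τ s t : ℝ⦄, τ ≤ s → s ≤ t → ∀ x : X, U t s (U s τ x) = U t τ x)
    (𝒟 : Set (ℝ → Set X)) (h𝒟ne : 𝒟.Nonempty)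
    (h𝒟 : ∀ Dh ∈ 𝒟, ∀ t : ℝ, (Dh t).Nonempty)
    -- the pullback 𝒟-condition (MWZ)
    (hMWZ : ∀ Dh ∈ 𝒟, ∀ t : ℝ, ∀ ε : ℝ, 0 < ε →
      ∃ τε ≤ t, ∃ X₁ : Submodule ℝ X, FiniteDimensional ℝ X₁ ∧
        ∃ P : X →L[ℝ] X, (∀ x, P (P x) = P x) ∧ (∀ x, P x ∈ X₁) ∧
          Bornology.IsBounded (P '' (⋃ s ∈ Set.Iic τε, U t s '' Dh s)) ∧
          (∀ x ∈ ⋃ s ∈ Set.Iic τε, U t s '' Dh s, ‖x - P x‖ ≤ ε)) :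
    -- pullback 𝒟-asymptotic compactness
    ∀ Dh ∈ 𝒟, ∀ t : ℝ, ∀ (τn : ℕ → ℝ) (xn : ℕ → X),
      (∀ n, τn n ≤ t) → Tendsto τn atTop atBot → (∀ n, xn n ∈ Dh (τn n)) →
      ∃ (y : X) (φ : ℕ → ℕ), StrictMono φ ∧
        Tendsto (fun n => U t (τn (φ n)) (xn (φ n))) atTop (𝓝 y) := by
  intro Dh hDh t τn xn hτt hτ hxn
  set y : ℕ → X := fun n => U t (τn n) (xn n) with hy
  have htb : TotallyBounded (Set.range y) := by
    rw [Metric.totallyBounded_iff]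
    intro ε hε
    obtain ⟨τε, hτε, X₁, hfd, P, hPP, hPX₁, hbdd, happrox⟩ :=
      hMWZ Dh hDh t (ε / 3) (by positivity)
    have hev : ∀ᶠ n in atTop, τn n ≤ τε := hτ.eventually (eventually_le_atBot τε)
    obtain ⟨N, hN⟩ := Filter.eventually_atTop.mp hev
    have hmem : ∀ n, τn n ≤ τε → y n ∈ ⋃ s ∈ Set.Iic τε, U t s '' Dh s := fun n hn =>
      Set.mem_biUnion hn ⟨xn n, hxn n, rfl⟩
    set S' := P '' (⋃ s ∈ Set.Iic τε, U t s '' Dh s) with hS'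
    have hsub : S' ⊆ (X₁ : Set X) := by rintro _ ⟨x, hx, rfl⟩; exact hPX₁ x
    haveI := hfd
    have hTbdd : Bornology.IsBounded (Subtype.val ⁻¹' S' : Set X₁) := by
      obtain ⟨C, hC⟩ := Metric.isBounded_iff.1 hbdd
      exact Metric.isBounded_iff.2
        ⟨C, fun a ha b hb => by simpa [Subtype.dist_eq] using hC ha hb⟩
    have hTtb : TotallyBounded (Subtype.val ⁻¹' S' : Set X₁) :=
      hTbdd.isCompact_closure.totallyBounded.subset subset_closure
    have hS'eq : S' = Subtype.val '' (Subtype.val ⁻¹' S' : Set X₁) := by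
      ext z
      constructor
      · intro hz; exact ⟨⟨z, hsub hz⟩, hz, rfl⟩
      · rintro ⟨a, ha, rfl⟩; exact ha
    have hS'tb : TotallyBounded S' := by
      rw [hS'eq]; exact hTtb.image uniformContinuous_subtype_val
    obtain ⟨c, hcfin, hccov⟩ := Metric.totallyBounded_iff.1 hS'tb (ε / 3) (by positivity)
    refine ⟨(y '' Set.Iio N) ∪ c, ((Set.finite_Iio N).image y).union hcfin, ?_⟩
    rintro _ ⟨n, rfl⟩
    by_cases hn : n < N
    · exact Set.mem_biUnion (Or.inl ⟨n, hn, rfl⟩) (Metric.mem_ball_self hε)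
    · have hm := hmem n (hN n (le_of_not_gt hn))
      have hPy : P (y n) ∈ S' := ⟨y n, hm, rfl⟩
      obtain ⟨z, hz, hzball⟩ := Set.mem_iUnion₂.1 (hccov hPy)
      refine Set.mem_biUnion (Or.inr hz) ?_
      have h1 : dist (y n) (P (y n)) ≤ ε / 3 := by
        rw [dist_eq_norm]; exact happrox _ hm
      have h2 : dist (P (y n)) z < ε / 3 := Metric.mem_ball.1 hzball
      have : dist (y n) z < ε := by
        calc dist (y n) z ≤ dist (y n) (P (y n)) + dist (P (y n)) z := dist_triangle _ _ _
          _ < ε / 3 + ε / 3 := by linarith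
          _ < ε := by linarith
      exact Metric.mem_ball.2 this
  have hK : IsCompact (closure (Set.range y)) :=
    TotallyBounded.isCompact_of_isClosed htb.closure isClosed_closure
  obtain ⟨a, -, φ, hφ, hconv⟩ :=
    hK.tendsto_subseq (fun n => subset_closure (Set.mem_range_self n))
  exact ⟨a, φ, hφ, hconv⟩
end

section
/- Let X be a complete metric space, U a process on X, and D a universe in X. Let D̂₀ = {D₀(t) : t ∈ ℝ} be a family of nonempty subsets of X which is pullback D-absorbing for U, and suppose U is pullback D̂₀-asymptotically compact. Then U is pullback D-asymptotically compact: for every D̂ ∈ D, every t ∈ ℝ and all sequences τ_n ≤ t with τ_n → −∞ and x_n ∈ D(τ_n), the sequence (U(t,τ_n)x_n)_n is relatively compact in X. -/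
open Filter Topology

/-- If a family `D₀` of nonempty sets is pullback `𝒟`-absorbing for the process `U` and
`U` is pullback `D̂₀`-asymptotically compact, then `U` is pullback `𝒟`-asymptotically
compact. -/
theorem absorbing_and_D0_asymptotically_compact_implies_D_asymptotically_compact
    {X : Type*} [MetricSpace X] [CompleteSpace X]
    (U : ℝ → ℝ → X → X)
    (hid : ∀ τ : ℝ, ∀ x : X, U τ τ x = x)
    (hcomp : ∀ ⦃τ s t : ℝ⦄, τ ≤ s → s ≤ t → ∀ x : X, U t s (U s τ x) = U t τ x)
    (𝒟 : Set (ℝ → Set X)) (h𝒟ne : 𝒟.Nonempty)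
    (h𝒟 : ∀ Dh ∈ 𝒟, ∀ t : ℝ, (Dh t).Nonempty)
    (D₀ : ℝ → Set X) (hD₀ : ∀ t : ℝ, (D₀ t).Nonempty)
    -- D₀ is pullback 𝒟-absorbing
    (habs : ∀ Dh ∈ 𝒟, ∀ t : ℝ, ∃ τ₀ ≤ t, ∀ τ ≤ τ₀, U t τ '' Dh τ ⊆ D₀ t)
    -- U is pullback D̂₀-asymptotically compact
    (hac : ∀ t : ℝ, ∀ (τn : ℕ → ℝ) (xn : ℕ → X),
      (∀ n, τn n ≤ t) → Tendsto τn atTop atBot → (∀ n, xn n ∈ D₀ (τn n)) →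
      IsCompact (closure (Set.range fun n => U t (τn n) (xn n)))) :
    -- U is pullback 𝒟-asymptotically compact
    ∀ Dh ∈ 𝒟, ∀ t : ℝ, ∀ (τn : ℕ → ℝ) (xn : ℕ → X),
      (∀ n, τn n ≤ t) → Tendsto τn atTop atBot → (∀ n, xn n ∈ Dh (τn n)) →
      IsCompact (closure (Set.range fun n => U t (τn n) (xn n))) := by
  intro Dh hDh t τn xn hle htend hx
  -- absorbing times at target times `min t (-m)`
  have H : ∀ m : ℕ, ∃ r ≤ min t (-(m : ℝ)),
      ∀ τ ≤ r, U (min t (-(m : ℝ))) τ '' Dh τ ⊆ D₀ (min t (-(m : ℝ))) := fun m =>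
    habs Dh hDh _
  choose r hr1 hr2 using H
  -- tail index after which τn n ≤ r 0
  obtain ⟨N₀, hN₀⟩ := eventually_atTop.mp (htend.eventually_le_atBot (r 0))
  set τ' : ℕ → ℝ := fun n => τn (n + N₀) with hτ'
  set x' : ℕ → X := fun n => xn (n + N₀) with hx'
  have htend' : Tendsto τ' atTop atBot := htend.comp (tendsto_add_atTop_nat N₀)
  have hx'mem : ∀ n, x' n ∈ Dh (τ' n) := fun n => hx (n + N₀)
  set A : ℕ → Finset ℕ := fun n => (Finset.range (n + 1)).filter (fun m => τ' n ≤ r m) with hA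
  have hAne : ∀ n, (A n).Nonempty := by
    intro n
    exact ⟨0, Finset.mem_filter.2 ⟨Finset.mem_range.2 (Nat.succ_pos n),
      hN₀ (n + N₀) (Nat.le_add_left _ _)⟩⟩
  set m : ℕ → ℕ := fun n => (A n).max' (hAne n) with hm
  have hm1 : ∀ n, τ' n ≤ r (m n) := fun n =>
    (Finset.mem_filter.1 ((A n).max'_mem (hAne n))).2
  have hmtop : Tendsto m atTop atTop := by
    rw [tendsto_atTop]
    intro M
    filter_upwards [eventually_ge_atTop M, htend'.eventually_le_atBot (r M)] with n h1 h2
    exact Finset.le_max' _ M (Finset.mem_filter.2 ⟨Finset.mem_range.2 (Nat.lt_succ_of_le h1), h2⟩)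
  set σ : ℕ → ℝ := fun n => min t (-(m n : ℝ)) with hσ
  have hσt : ∀ n, σ n ≤ t := fun n => min_le_left _ _
  have hσbot : Tendsto σ atTop atBot := by
    refine tendsto_atBot_mono (fun n => min_le_right _ _) ?_
    exact tendsto_neg_atTop_atBot.comp (tendsto_natCast_atTop_atTop.comp hmtop)
  set y : ℕ → X := fun n => U (σ n) (τ' n) (x' n) with hy
  have hymem : ∀ n, y n ∈ D₀ (σ n) := fun n =>
    hr2 (m n) (τ' n) (hm1 n) ⟨x' n, hx'mem n, rfl⟩
  have hτσ : ∀ n, τ' n ≤ σ n := fun n => (hm1 n).trans (hr1 (m n))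
  have hkey : (fun n => U t (σ n) (y n)) = fun n => U t (τ' n) (x' n) := by
    funext n
    exact hcomp (hτσ n) (hσt n) (x' n)
  have htail : IsCompact (closure (Set.range fun n => U t (τ' n) (x' n))) := by
    rw [← hkey]
    exact hac t σ y hσt hσbot hymem
  -- combine with the finitely many initial terms
  set f : ℕ → X := fun n => U t (τn n) (xn n) with hf
  have hfin : (f '' Set.Iio N₀).Finite := (Set.finite_Iio N₀).image f
  set C : Set X := (f '' Set.Iio N₀) ∪ closure (Set.range fun n => U t (τ' n) (x' n)) with hC
  have hCcomp : IsCompact C := hfin.isCompact.union htail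
  have hCclosed : IsClosed C := hfin.isClosed.union isClosed_closure
  have hsub : Set.range f ⊆ C := by
    rintro _ ⟨n, rfl⟩
    rcases lt_or_ge n N₀ with h | h
    · exact Or.inl ⟨n, h, rfl⟩
    · refine Or.inr (subset_closure ⟨n - N₀, ?_⟩)
      simp only [hτ', hx']
      rw [Nat.sub_add_cancel h]
  exact hCcomp.of_isClosed_subset isClosed_closure (closure_minimal hsub hCclosed)
end

section
/- Let X be a complete metric space, U a closed process on X, and D a universe in X. Suppose there is a family D̂₀ = {D₀(t) : t ∈ ℝ} of nonempty subsets of X which is pullback D-absorbing for U, and suppose U is pullback D̂₀-asymptotically compact. Then for every t ∈ ℝ the set A_D(t) = cl(⋃_{D̂∈D} Λ(D̂,t)) is a nonempty compact subset of X, and A_D(t) ⊆ Λ(D̂₀,t). -/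
open Filter Topology

/-- The pullback omega-limit set `Λ(D̂,t) = ⋂_{s ≤ t} cl(⋃_{τ ≤ s} U(t,τ)D(τ))`. -/
def pullbackOmega {X : Type*} [TopologicalSpace X]
    (U : ℝ → ℝ → X → X) (Dh : ℝ → Set X) (t : ℝ) : Set X :=
  ⋂ s ∈ Set.Iic t, closure (⋃ τ ∈ Set.Iic s, U t τ '' Dh τ)

lemma mem_pullbackOmega_of_tendsto {X : Type*} [MetricSpace X]
    (U : ℝ → ℝ → X → X) (Dh : ℝ → Set X) (t : ℝ)
    {τn : ℕ → ℝ} {pn : ℕ → X} (hτ : Tendsto τn atTop atBot)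
    (hp : ∀ n, pn n ∈ U t (τn n) '' Dh (τn n))
    {y : X} (hy : Tendsto pn atTop (𝓝 y)) : y ∈ pullbackOmega U Dh t := by
  refine Set.mem_iInter₂.2 fun s _hs => ?_
  refine mem_closure_of_tendsto hy ?_
  filter_upwards [hτ.eventually (eventually_le_atBot s)] with n hn
  exact Set.mem_biUnion hn (hp n)

lemma min_tendsto_atBot (t : ℝ) :
    Tendsto (fun n : ℕ => min t (-(n : ℝ))) atTop atBot := by
  refine tendsto_atBot_mono (fun n => min_le_right _ _) ?_
  exact tendsto_neg_atBot_iff.2 tendsto_natCast_atTop_atTop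

/-- For a closed process with a pullback `𝒟`-absorbing family `D₀` and pullback
`D̂₀`-asymptotic compactness, each section `A_𝒟(t) = cl(⋃_{D̂ ∈ 𝒟} Λ(D̂,t))` is a
nonempty compact subset of `X` contained in `Λ(D̂₀,t)`. -/
theorem pullback_attractor_sections_nonempty_compact
    {X : Type*} [MetricSpace X] [CompleteSpace X]
    (U : ℝ → ℝ → X → X)
    (hid : ∀ τ : ℝ, ∀ x : X, U τ τ x = x)
    (hcomp : ∀ ⦃τ s t : ℝ⦄, τ ≤ s → s ≤ t → ∀ x : X, U t s (U s τ x) = U t τ x)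
    -- U is a closed process
    (hclosed : ∀ ⦃τ t : ℝ⦄, τ ≤ t → ∀ (xn : ℕ → X) (x y : X),
      Tendsto xn atTop (𝓝 x) → Tendsto (fun n => U t τ (xn n)) atTop (𝓝 y) →
      y = U t τ x)
    (𝒟 : Set (ℝ → Set X)) (h𝒟ne : 𝒟.Nonempty)
    (h𝒟 : ∀ Dh ∈ 𝒟, ∀ t : ℝ, (Dh t).Nonempty)
    (D₀ : ℝ → Set X) (hD₀ : ∀ t : ℝ, (D₀ t).Nonempty)
    -- D₀ is pullback 𝒟-absorbing
    (habs : ∀ Dh ∈ 𝒟, ∀ t : ℝ, ∃ τ₀ ≤ t, ∀ τ ≤ τ₀, U t τ '' Dh τ ⊆ D₀ t)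
    -- U is pullback D̂₀-asymptotically compact
    (hac : ∀ t : ℝ, ∀ (τn : ℕ → ℝ) (xn : ℕ → X),
      (∀ n, τn n ≤ t) → Tendsto τn atTop atBot → (∀ n, xn n ∈ D₀ (τn n)) →
      IsCompact (closure (Set.range fun n => U t (τn n) (xn n)))) :
    ∀ t : ℝ,
      (closure (⋃ Dh ∈ 𝒟, pullbackOmega U Dh t)).Nonempty ∧
      IsCompact (closure (⋃ Dh ∈ 𝒟, pullbackOmega U Dh t)) ∧
      closure (⋃ Dh ∈ 𝒟, pullbackOmega U Dh t) ⊆ pullbackOmega U D₀ t := by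
  intro t
  set sn : ℕ → ℝ := fun n => min t (-(n : ℝ)) with hsn_def
  have hsn_t : ∀ n, sn n ≤ t := fun n => min_le_left _ _
  have hsn_bot : Tendsto sn atTop atBot := min_tendsto_atBot t
  -- Λ(D₀,t) is closed
  have hΛclosed : IsClosed (pullbackOmega U D₀ t) :=
    isClosed_biInter fun s _ => isClosed_closure
  -- inclusion : each Λ(Dh,t) ⊆ Λ(D₀,t)
  have hsub : ∀ Dh ∈ 𝒟, pullbackOmega U Dh t ⊆ pullbackOmega U D₀ t := by
    intro Dh hDh y hy
    refine Set.mem_iInter₂.2 fun s hs => ?_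
    obtain ⟨τ₀, hτ₀, habs'⟩ := habs Dh hDh s
    have h1 := Set.mem_iInter₂.1 hy τ₀ (hτ₀.trans hs)
    refine closure_mono ?_ h1
    refine Set.iUnion₂_subset fun τ hτ => ?_
    rintro p ⟨x, hx, rfl⟩
    have hmem : U s τ x ∈ D₀ s := habs' τ hτ ⟨x, hx, rfl⟩
    have heq : U t s (U s τ x) = U t τ x := hcomp (hτ.trans hτ₀) hs x
    exact Set.mem_biUnion (Set.mem_Iic.2 le_rfl) ⟨U s τ x, hmem, heq⟩
  have hAsub : closure (⋃ Dh ∈ 𝒟, pullbackOmega U Dh t) ⊆ pullbackOmega U D₀ t :=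
    closure_minimal (Set.iUnion₂_subset hsub) hΛclosed
  -- Λ(D₀,t) is compact (via sequential compactness)
  have hΛcompact : IsCompact (pullbackOmega U D₀ t) := by
    refine IsSeqCompact.isCompact ?_
    intro y hy
    have key : ∀ k : ℕ, ∃ τ ≤ sn k, ∃ x ∈ D₀ τ,
        dist (y k) (U t τ x) < 1 / (k + 1) := by
      intro k
      have h1 := Set.mem_iInter₂.1 (hy k) (sn k) (hsn_t k)
      rw [Metric.mem_closure_iff] at h1
      obtain ⟨b, hb, hdist⟩ := h1 (1 / (k + 1)) (by positivity)
      obtain ⟨τ, hτ, x, hx, rfl⟩ := by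
        simpa only [Set.mem_iUnion, Set.mem_image, Set.mem_Iic] using hb
      exact ⟨τ, hτ, x, hx, hdist⟩
    choose τk hτk xk hxk hdk using key
    have hτk_t : ∀ k, τk k ≤ t := fun k => (hτk k).trans (hsn_t k)
    have hτk_bot : Tendsto τk atTop atBot := tendsto_atBot_mono hτk hsn_bot
    have hK := hac t τk xk hτk_t hτk_bot hxk
    have hmemK : ∀ k, U t (τk k) (xk k) ∈
        closure (Set.range fun n => U t (τk n) (xk n)) :=
      fun k => subset_closure ⟨k, rfl⟩
    obtain ⟨z, _, φ, hφ, hconv⟩ := hK.tendsto_subseq hmemK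
    have hz : z ∈ pullbackOmega U D₀ t :=
      mem_pullbackOmega_of_tendsto U D₀ t (hτk_bot.comp hφ.tendsto_atTop)
        (fun n => ⟨xk (φ n), hxk (φ n), rfl⟩) hconv
    refine ⟨z, hz, φ, hφ, ?_⟩
    have hdist0 : Tendsto (fun k => dist (y (φ k)) (U t (τk (φ k)) (xk (φ k))))
        atTop (𝓝 0) := by
      refine squeeze_zero (fun k => dist_nonneg) (fun k => (hdk (φ k)).le.trans ?_)
        tendsto_one_div_add_atTop_nhds_zero_nat
      gcongr
      exact_mod_cast hφ.le_apply
    have : Tendsto (fun k => dist (y (φ k)) z) atTop (𝓝 0) := by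
      have hd2 : Tendsto (fun k => dist (U t (τk (φ k)) (xk (φ k))) z) atTop (𝓝 0) :=
        tendsto_iff_dist_tendsto_zero.1 hconv
      refine squeeze_zero (fun k => dist_nonneg)
        (fun k => dist_triangle (y (φ k)) (U t (τk (φ k)) (xk (φ k))) z) ?_
      simpa using hdist0.add hd2
    exact tendsto_iff_dist_tendsto_zero.2 this
  -- nonemptiness
  obtain ⟨Dh, hDh⟩ := h𝒟ne
  have key : ∀ n : ℕ, ∃ τ ≤ sn n, ∃ x ∈ Dh τ, U (sn n) τ x ∈ D₀ (sn n) := by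
    intro n
    obtain ⟨τ₀, hτ₀le, habs'⟩ := habs Dh hDh (sn n)
    obtain ⟨x, hx⟩ := h𝒟 Dh hDh τ₀
    exact ⟨τ₀, hτ₀le, x, hx, habs' τ₀ le_rfl ⟨x, hx, rfl⟩⟩
  choose τn hτle xn hxmem hDmem using key
  have hτ_bot : Tendsto τn atTop atBot := tendsto_atBot_mono hτle hsn_bot
  have hK := hac t sn (fun n => U (sn n) (τn n) (xn n)) hsn_t hsn_bot hDmem
  have heq : ∀ n, U t (sn n) (U (sn n) (τn n) (xn n)) = U t (τn n) (xn n) :=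
    fun n => hcomp (hτle n) (hsn_t n) (xn n)
  have hmemK : ∀ n, U t (sn n) (U (sn n) (τn n) (xn n)) ∈
      closure (Set.range fun n => U t (sn n) (U (sn n) (τn n) (xn n))) :=
    fun n => subset_closure ⟨n, rfl⟩
  obtain ⟨z, _, φ, hφ, hconv⟩ := hK.tendsto_subseq hmemK
  have hz : z ∈ pullbackOmega U Dh t := by
    refine mem_pullbackOmega_of_tendsto U Dh t (hτ_bot.comp hφ.tendsto_atTop)
      (fun n => ?_) hconv
    exact ⟨xn (φ n), hxmem (φ n), (heq (φ n)).symm ▸ rfl⟩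
  refine ⟨⟨z, subset_closure (Set.mem_biUnion hDh hz)⟩,
    hΛcompact.of_isClosed_subset isClosed_closure hAsub, hAsub⟩
end

section
/- Let X be a complete metric space, U a closed process on X, and D a universe in X. Suppose there is a family D̂₀ = {D₀(t) : t ∈ ℝ} of nonempty subsets of X which is pullback D-absorbing for U, and suppose U is pullback D̂₀-asymptotically compact. Then the family {A_D(t)} with A_D(t) = cl(⋃_{D̂∈D} Λ(D̂,t)) pullback D-attracts: for every D̂ ∈ D and every t ∈ ℝ, lim_{τ→−∞} dist(U(t,τ)D(τ), A_D(t)) = 0, where dist denotes the Hausdorff semidistance. -/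
open Filter Topology

/-- The Hausdorff semidistance `dist(A,B) = sup_{a ∈ A} inf_{b ∈ B} d(a,b)`
(valued in `ℝ≥0∞`). -/
noncomputable def semidist {X : Type*} [MetricSpace X] (A B : Set X) : ENNReal :=
  ⨆ a ∈ A, EMetric.infEdist a B

/-!
Pull a sequence `U(t,τₙ)xₙ` with `xₙ ∈ D(τₙ)`, `τₙ → -∞` back through the absorbing family:
after passing to a subsequence with `τₙ` below the absorption time of `D̂` at `t - n`, the
cocycle property rewrites it as `U(t, t-n) zₙ` with `zₙ ∈ D₀(t-n)`, so asymptotic compactness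
gives a cluster point, which lies in `Λ(D̂,t) ⊆ A_𝒟(t)`. If the semidistance did not tend to
zero, some such sequence would stay `ε` away from `A_𝒟(t)`, and so would its cluster point.
-/

open Set Metric

theorem tendsto_semidist_atBot_of_mapClusterPt {X : Type*} [MetricSpace X]
    {S : ℝ → Set X} {A : Set X}
    (h : ∀ (τ : ℕ → ℝ) (x : ℕ → X), Tendsto τ atTop atBot → (∀ n, x n ∈ S (τ n)) →
      ∃ a ∈ closure A, MapClusterPt a atTop x) :
    Tendsto (fun τ => semidist (S τ) A) atBot (𝓝 0) := by
  rw [ENNReal.tendsto_nhds_zero]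
  intro ε hε
  by_contra hfreq
  have hfar : ∀ n : ℕ, ∃ τ ≤ -(n : ℝ), ∃ x ∈ S τ, ε < infEDist x A := by
    intro n
    obtain ⟨τ, hτn, hτ⟩ := frequently_atBot.mp (not_eventually.mp hfreq) (-n)
    simp only [not_le, semidist, lt_iSup_iff] at hτ
    obtain ⟨x, hx, hεx⟩ := hτ
    exact ⟨τ, hτn, x, hx, hεx⟩
  choose τ hτ x hx hεx using hfar
  have hτ_bot : Tendsto τ atTop atBot :=
    tendsto_atBot_mono hτ (tendsto_neg_atBot_iff.mpr tendsto_natCast_atTop_atTop)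
  obtain ⟨a, haA, ha⟩ := h τ x hτ_bot hx
  have hεa : ε ≤ infEDist a A :=
    (isClosed_le continuous_const continuous_infEDist).mem_of_mapClusterPt ha
      (Eventually.of_forall fun n => (hεx n).le)
  rw [mem_closure_iff_infEDist_zero.mp haA] at hεa
  exact hε.not_ge hεa

theorem MapClusterPt.mem_pullbackOmega {X : Type*} [TopologicalSpace X]
    {U : ℝ → ℝ → X → X} {Dh : ℝ → Set X} {t : ℝ} {τ : ℕ → ℝ} {y : ℕ → X} {a : X}
    (ha : MapClusterPt a atTop y) (hτ : Tendsto τ atTop atBot)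
    (hy : ∀ n, y n ∈ U t (τ n) '' Dh (τ n)) :
    a ∈ pullbackOmega U Dh t :=
  mem_iInter₂.mpr fun s _ => isClosed_closure.mem_of_mapClusterPt ha <|
    (hτ.eventually_le_atBot s).mono fun n hn => subset_closure (mem_biUnion hn (hy n))

theorem exists_mapClusterPt_of_absorbing {X : Type*} [TopologicalSpace X]
    {U : ℝ → ℝ → X → X}
    (hcomp : ∀ ⦃τ s t : ℝ⦄, τ ≤ s → s ≤ t → ∀ x : X, U t s (U s τ x) = U t τ x)
    {D₀ Dh : ℝ → Set X} (habs : ∀ t : ℝ, ∃ τ₀ ≤ t, ∀ τ ≤ τ₀, U t τ '' Dh τ ⊆ D₀ t)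
    (hac : ∀ t : ℝ, ∀ (τn : ℕ → ℝ) (xn : ℕ → X),
      (∀ n, τn n ≤ t) → Tendsto τn atTop atBot → (∀ n, xn n ∈ D₀ (τn n)) →
      IsCompact (closure (range fun n => U t (τn n) (xn n))))
    (t : ℝ) {τ : ℕ → ℝ} {y : ℕ → X} (hτ : Tendsto τ atTop atBot)
    (hy : ∀ n, y n ∈ U t (τ n) '' Dh (τ n)) :
    ∃ a, MapClusterPt a atTop y := by
  choose x hx hxy using hy
  choose τ₀ hτ₀ hτ₀_abs using fun k : ℕ => habs (t - k)
  obtain ⟨φ, hφ, hφτ⟩ := extraction_forall_of_eventually fun k => hτ.eventually_le_atBot (τ₀ k)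
  have hs : ∀ k : ℕ, t - k ≤ t := fun k => sub_le_self t k.cast_nonneg
  have hs_bot : Tendsto (fun k : ℕ => t - k) atTop atBot :=
    tendsto_atBot_add_const_left _ t (tendsto_neg_atBot_iff.mpr tendsto_natCast_atTop_atTop)
  set z : ℕ → X := fun k => U (t - k) (τ (φ k)) (x (φ k))
  have hz : ∀ k : ℕ, z k ∈ D₀ (t - k) := fun k =>
    hτ₀_abs k _ (hφτ k) (mem_image_of_mem _ (hx _))
  have hUz : ∀ k : ℕ, U t (t - k) (z k) = y (φ k) := fun k =>
    (hcomp ((hφτ k).trans (hτ₀ k)) (hs k) _).trans (hxy _)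
  obtain ⟨a, -, ha⟩ := (hac t _ z hs hs_bot hz).exists_mapClusterPt_of_frequently
    (l := atTop) (Frequently.of_forall fun k => subset_closure (mem_range_self k))
  simp only [hUz] at ha
  exact ⟨a, ha.of_comp hφ.tendsto_atTop⟩

theorem pullback_attractor_attracts_general
    {X : Type*} [MetricSpace X]
    (U : ℝ → ℝ → X → X)
    (hcomp : ∀ ⦃τ s t : ℝ⦄, τ ≤ s → s ≤ t → ∀ x : X, U t s (U s τ x) = U t τ x)
    (𝒟 : Set (ℝ → Set X))
    (D₀ : ℝ → Set X)
    -- D₀ is pullback 𝒟-absorbing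
    (habs : ∀ Dh ∈ 𝒟, ∀ t : ℝ, ∃ τ₀ ≤ t, ∀ τ ≤ τ₀, U t τ '' Dh τ ⊆ D₀ t)
    -- U is pullback D̂₀-asymptotically compact
    (hac : ∀ t : ℝ, ∀ (τn : ℕ → ℝ) (xn : ℕ → X),
      (∀ n, τn n ≤ t) → Tendsto τn atTop atBot → (∀ n, xn n ∈ D₀ (τn n)) →
      IsCompact (closure (Set.range fun n => U t (τn n) (xn n)))) :
    ∀ Dh ∈ 𝒟, ∀ t : ℝ,
      Tendsto (fun τ => semidist (U t τ '' Dh τ)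
          (closure (⋃ Eh ∈ 𝒟, pullbackOmega U Eh t)))
        atBot (𝓝 0) := by
  intro Dh hDh t
  refine tendsto_semidist_atBot_of_mapClusterPt fun τ x hτ hx => ?_
  obtain ⟨a, ha⟩ := exists_mapClusterPt_of_absorbing hcomp (habs Dh hDh) hac t hτ hx
  exact ⟨a, subset_closure (subset_closure (mem_biUnion hDh (ha.mem_pullbackOmega hτ hx))), ha⟩

/-- For a closed process with a pullback `𝒟`-absorbing family `D₀` and pullback
`D̂₀`-asymptotic compactness, the family `A_𝒟(t) = cl(⋃_{D̂ ∈ 𝒟} Λ(D̂,t))` pullback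
`𝒟`-attracts: `dist(U(t,τ)D(τ), A_𝒟(t)) → 0` as `τ → -∞`. -/
theorem pullback_attractor_attracts
    {X : Type*} [MetricSpace X] [CompleteSpace X]
    (U : ℝ → ℝ → X → X)
    (hid : ∀ τ : ℝ, ∀ x : X, U τ τ x = x)
    (hcomp : ∀ ⦃τ s t : ℝ⦄, τ ≤ s → s ≤ t → ∀ x : X, U t s (U s τ x) = U t τ x)
    -- U is a closed process
    (hclosed : ∀ ⦃τ t : ℝ⦄, τ ≤ t → ∀ (xn : ℕ → X) (x y : X),
      Tendsto xn atTop (𝓝 x) → Tendsto (fun n => U t τ (xn n)) atTop (𝓝 y) →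
      y = U t τ x)
    (𝒟 : Set (ℝ → Set X)) (h𝒟ne : 𝒟.Nonempty)
    (h𝒟 : ∀ Dh ∈ 𝒟, ∀ t : ℝ, (Dh t).Nonempty)
    (D₀ : ℝ → Set X) (hD₀ : ∀ t : ℝ, (D₀ t).Nonempty)
    -- D₀ is pullback 𝒟-absorbing
    (habs : ∀ Dh ∈ 𝒟, ∀ t : ℝ, ∃ τ₀ ≤ t, ∀ τ ≤ τ₀, U t τ '' Dh τ ⊆ D₀ t)
    -- U is pullback D̂₀-asymptotically compact
    (hac : ∀ t : ℝ, ∀ (τn : ℕ → ℝ) (xn : ℕ → X),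
      (∀ n, τn n ≤ t) → Tendsto τn atTop atBot → (∀ n, xn n ∈ D₀ (τn n)) →
      IsCompact (closure (Set.range fun n => U t (τn n) (xn n)))) :
    ∀ Dh ∈ 𝒟, ∀ t : ℝ,
      Tendsto (fun τ => semidist (U t τ '' Dh τ)
          (closure (⋃ Eh ∈ 𝒟, pullbackOmega U Eh t)))
        atBot (𝓝 0) :=
  pullback_attractor_attracts_general U hcomp 𝒟 D₀ habs hac
end

section
/- Let X be a complete metric space, U a closed process on X, and D a universe in X. Suppose there is a family D̂₀ = {D₀(t) : t ∈ ℝ} of nonempty subsets of X which is pullback D-absorbing for U, and suppose U is pullback D̂₀-asymptotically compact. Then the family A_D(t) = cl(⋃_{D̂∈D} Λ(D̂,t)) is invariant under the process: U(t,τ)A_D(τ) = A_D(t) for all τ ≤ t. -/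
open Filter Topology

section Aux

variable {X : Type*} [MetricSpace X] {U : ℝ → ℝ → X → X}

/-- From membership in the pullback omega-limit set, extract approximating sequences. -/
lemma omega_exists_seq {Dh : ℝ → Set X} {t : ℝ} {y : X}
    (hy : y ∈ pullbackOmega U Dh t) :
    ∃ (σ : ℕ → ℝ) (x : ℕ → X), (∀ n, σ n ≤ min t (-(n : ℝ))) ∧
      (∀ n, x n ∈ Dh (σ n)) ∧
      Tendsto (fun n => U t (σ n) (x n)) atTop (𝓝 y) := by
  have h : ∀ n : ℕ, ∃ (σn : ℝ) (xn : X), σn ≤ min t (-(n : ℝ)) ∧ xn ∈ Dh σn ∧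
      dist (U t σn xn) y < 1 / ((n : ℝ) + 1) := by
    intro n
    have hy' : y ∈ closure (⋃ τ ∈ Set.Iic (min t (-(n : ℝ))), U t τ '' Dh τ) :=
      Set.mem_iInter₂.mp hy _ (Set.mem_Iic.mpr (min_le_left _ _))
    obtain ⟨b, hb, hdist⟩ := Metric.mem_closure_iff.mp hy' (1 / ((n : ℝ) + 1)) (by positivity)
    simp only [Set.mem_iUnion, Set.mem_image, Set.mem_Iic] at hb
    obtain ⟨σn, hσn, xn, hxn, rfl⟩ := hb
    exact ⟨σn, xn, hσn, hxn, by rwa [dist_comm]⟩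
  choose σ x hσ hx hd using h
  refine ⟨σ, x, hσ, hx, ?_⟩
  have hb : Tendsto (fun n : ℕ => dist (U t (σ n) (x n)) y) atTop (𝓝 0) :=
    squeeze_zero (fun n => dist_nonneg) (fun n => (hd n).le)
      tendsto_one_div_add_atTop_nhds_zero_nat
  exact tendsto_iff_dist_tendsto_zero.mpr hb

/-- Converse: sequences converging from the pullback give membership in the omega-limit set. -/
lemma seq_mem_omega {Dh : ℝ → Set X} {t : ℝ} {y : X}
    {σ : ℕ → ℝ} {x : ℕ → X}
    (hσ : Tendsto σ atTop atBot) (hx : ∀ n, x n ∈ Dh (σ n))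
    (hconv : Tendsto (fun n => U t (σ n) (x n)) atTop (𝓝 y)) :
    y ∈ pullbackOmega U Dh t := by
  refine Set.mem_iInter₂.mpr fun s _ => ?_
  refine mem_closure_of_tendsto hconv ?_
  filter_upwards [hσ.eventually (eventually_le_atBot s)] with n hn
  exact Set.mem_biUnion hn (Set.mem_image_of_mem _ (hx n))

variable {𝒟 : Set (ℝ → Set X)} {D₀ : ℝ → Set X}

/-- Reroute a pullback sequence through the absorbing family `D₀` at times going to `-∞`
below `τ`. -/
lemma mem_K
    (hcomp : ∀ ⦃τ s t : ℝ⦄, τ ≤ s → s ≤ t → ∀ x : X, U t s (U s τ x) = U t τ x)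
    (habs : ∀ Dh ∈ 𝒟, ∀ t : ℝ, ∃ τ₀ ≤ t, ∀ τ ≤ τ₀, U t τ '' Dh τ ⊆ D₀ t)
    {Dh : ℝ → Set X} (hD : Dh ∈ 𝒟) {t τ : ℝ} (hτt : τ ≤ t) {y : X}
    (hy : y ∈ pullbackOmega U Dh t) :
    ∃ (r σ' : ℕ → ℝ) (x' x'' : ℕ → X),
      (∀ k, r k ≤ τ) ∧ (∀ k, r k ≤ -(k : ℝ)) ∧ (∀ k, x' k ∈ D₀ (r k)) ∧
      (∀ k, σ' k ≤ r k) ∧ (∀ k, x'' k ∈ Dh (σ' k)) ∧ Tendsto σ' atTop atBot ∧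
      (∀ k, ∀ t' : ℝ, r k ≤ t' → U t' (r k) (x' k) = U t' (σ' k) (x'' k)) ∧
      Tendsto (fun k => U t (r k) (x' k)) atTop (𝓝 y) := by
  obtain ⟨σ, x, hσ, hx, hconv⟩ := omega_exists_seq hy
  have hσb : Tendsto σ atTop atBot :=
    tendsto_atBot_mono (fun n => (hσ n).trans (min_le_right _ _))
      (tendsto_neg_atTop_atBot.comp tendsto_natCast_atTop_atTop)
  -- for each k, choose an index m k with k ≤ m k and σ (m k) small enough to be absorbed
  have h : ∀ k : ℕ, ∃ m : ℕ, k ≤ m ∧ σ m ≤ min τ (-(k : ℝ)) ∧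
      U (min τ (-(k : ℝ))) (σ m) (x m) ∈ D₀ (min τ (-(k : ℝ))) := by
    intro k
    obtain ⟨τ₀, _, hτ₀⟩ := habs Dh hD (min τ (-(k : ℝ)))
    obtain ⟨N, hN⟩ := eventually_atTop.mp
      (hσb.eventually (eventually_le_atBot (min τ₀ (min τ (-(k : ℝ))))))
    refine ⟨max k N, le_max_left _ _, ?_, ?_⟩
    · exact (hN _ (le_max_right _ _)).trans (min_le_right _ _)
    · exact hτ₀ _ ((hN _ (le_max_right _ _)).trans (min_le_left _ _))
        (Set.mem_image_of_mem _ (hx _))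
  choose m hm1 hm2 hm3 using h
  have hmtop : Tendsto m atTop atTop := tendsto_atTop_mono hm1 tendsto_id
  refine ⟨fun k : ℕ => min τ (-(k : ℝ)), fun k : ℕ => σ (m k),
    fun k : ℕ => U (min τ (-(k : ℝ))) (σ (m k)) (x (m k)), fun k : ℕ => x (m k),
    fun k => min_le_left _ _, fun k => min_le_right _ _, hm3, hm2,
    fun k => hx (m k), hσb.comp hmtop, ?_, ?_⟩
  · intro k t' ht'
    exact hcomp (hm2 k) ht' (x (m k))
  · have key : ∀ k : ℕ, U t (min τ (-(k : ℝ))) (U (min τ (-(k : ℝ))) (σ (m k)) (x (m k)))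
        = U t (σ (m k)) (x (m k)) := fun k =>
      hcomp (hm2 k) ((min_le_left _ _).trans hτt) (x (m k))
    exact (hconv.comp hmtop).congr fun k => (key k).symm

/-- Forward inclusion: `U t τ '' Λ(D̂,τ) ⊆ Λ(D̂,t)`. -/
lemma omega_fwd
    (hcomp : ∀ ⦃τ s t : ℝ⦄, τ ≤ s → s ≤ t → ∀ x : X, U t s (U s τ x) = U t τ x)
    (hclosed : ∀ ⦃τ t : ℝ⦄, τ ≤ t → ∀ (xn : ℕ → X) (x y : X),
      Tendsto xn atTop (𝓝 x) → Tendsto (fun n => U t τ (xn n)) atTop (𝓝 y) →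
      y = U t τ x)
    (habs : ∀ Dh ∈ 𝒟, ∀ t : ℝ, ∃ τ₀ ≤ t, ∀ τ ≤ τ₀, U t τ '' Dh τ ⊆ D₀ t)
    (hac : ∀ t : ℝ, ∀ (τn : ℕ → ℝ) (xn : ℕ → X),
      (∀ n, τn n ≤ t) → Tendsto τn atTop atBot → (∀ n, xn n ∈ D₀ (τn n)) →
      IsCompact (closure (Set.range fun n => U t (τn n) (xn n))))
    {Dh : ℝ → Set X} (hD : Dh ∈ 𝒟) {τ t : ℝ} (hτt : τ ≤ t) :
    U t τ '' pullbackOmega U Dh τ ⊆ pullbackOmega U Dh t := by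
  rintro _ ⟨y, hy, rfl⟩
  obtain ⟨r, σ', x', x'', hrτ, hrk, hx', hσr, hx'', hσ'b, hid, hconv⟩ :=
    mem_K hcomp habs hD (le_refl τ) hy
  have hrb : Tendsto r atTop atBot :=
    tendsto_atBot_mono hrk (tendsto_neg_atTop_atBot.comp tendsto_natCast_atTop_atTop)
  have hK := hac t r x' (fun k => (hrτ k).trans hτt) hrb hx'
  obtain ⟨z, _, φ, hφ, hφconv⟩ :=
    hK.tendsto_subseq (x := fun k => U t (r k) (x' k))
      (fun k => subset_closure (Set.mem_range_self k))
  have hzmem : z ∈ pullbackOmega U Dh t := by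
    refine seq_mem_omega (σ := fun k => σ' (φ k)) (x := fun k => x'' (φ k))
      (hσ'b.comp (hφ.tendsto_atTop)) (fun k => hx'' (φ k)) ?_
    have : ∀ k, U t (r (φ k)) (x' (φ k)) = U t (σ' (φ k)) (x'' (φ k)) := fun k =>
      hid (φ k) t ((hrτ (φ k)).trans hτt)
    exact hφconv.congr fun k => this k
  have hzy : z = U t τ y := by
    refine hclosed hτt (fun k => U τ (r (φ k)) (x' (φ k))) y z ?_ ?_
    · exact hconv.comp hφ.tendsto_atTop
    · have : ∀ k, U t τ (U τ (r (φ k)) (x' (φ k))) = U t (r (φ k)) (x' (φ k)) :=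
        fun k => hcomp (hrτ (φ k)) hτt (x' (φ k))
      exact (hφconv.congr fun k => (this k).symm).congr fun k => rfl
  rwa [← hzy]

/-- Backward inclusion: `Λ(D̂,t) ⊆ U t τ '' Λ(D̂,τ)`. -/
lemma omega_bwd
    (hcomp : ∀ ⦃τ s t : ℝ⦄, τ ≤ s → s ≤ t → ∀ x : X, U t s (U s τ x) = U t τ x)
    (hclosed : ∀ ⦃τ t : ℝ⦄, τ ≤ t → ∀ (xn : ℕ → X) (x y : X),
      Tendsto xn atTop (𝓝 x) → Tendsto (fun n => U t τ (xn n)) atTop (𝓝 y) →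
      y = U t τ x)
    (habs : ∀ Dh ∈ 𝒟, ∀ t : ℝ, ∃ τ₀ ≤ t, ∀ τ ≤ τ₀, U t τ '' Dh τ ⊆ D₀ t)
    (hac : ∀ t : ℝ, ∀ (τn : ℕ → ℝ) (xn : ℕ → X),
      (∀ n, τn n ≤ t) → Tendsto τn atTop atBot → (∀ n, xn n ∈ D₀ (τn n)) →
      IsCompact (closure (Set.range fun n => U t (τn n) (xn n))))
    {Dh : ℝ → Set X} (hD : Dh ∈ 𝒟) {τ t : ℝ} (hτt : τ ≤ t) :
    pullbackOmega U Dh t ⊆ U t τ '' pullbackOmega U Dh τ := by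
  intro z hz
  obtain ⟨r, σ', x', x'', hrτ, hrk, hx', hσr, hx'', hσ'b, hid, hconv⟩ :=
    mem_K hcomp habs hD hτt hz
  have hrb : Tendsto r atTop atBot :=
    tendsto_atBot_mono hrk (tendsto_neg_atTop_atBot.comp tendsto_natCast_atTop_atTop)
  have hK := hac τ r x' hrτ hrb hx'
  obtain ⟨y, _, φ, hφ, hφconv⟩ :=
    hK.tendsto_subseq (x := fun k => U τ (r k) (x' k))
      (fun k => subset_closure (Set.mem_range_self k))
  have hymem : y ∈ pullbackOmega U Dh τ := by
    refine seq_mem_omega (σ := fun k => σ' (φ k)) (x := fun k => x'' (φ k))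
      (hσ'b.comp (hφ.tendsto_atTop)) (fun k => hx'' (φ k)) ?_
    have : ∀ k, U τ (r (φ k)) (x' (φ k)) = U τ (σ' (φ k)) (x'' (φ k)) := fun k =>
      hid (φ k) τ (hrτ (φ k))
    exact hφconv.congr fun k => this k
  have hzy : z = U t τ y := by
    refine hclosed hτt (fun k => U τ (r (φ k)) (x' (φ k))) y z hφconv ?_
    have : ∀ k, U t τ (U τ (r (φ k)) (x' (φ k))) = U t (r (φ k)) (x' (φ k)) :=
      fun k => hcomp (hrτ (φ k)) hτt (x' (φ k))
    exact ((hconv.comp hφ.tendsto_atTop).congr fun k => (this k).symm)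
  exact ⟨y, hymem, hzy.symm⟩

/-- Any sequence of points of the omega-limit sets has a convergent subsequence. -/
lemma exists_subseq
    (hcomp : ∀ ⦃τ s t : ℝ⦄, τ ≤ s → s ≤ t → ∀ x : X, U t s (U s τ x) = U t τ x)
    (habs : ∀ Dh ∈ 𝒟, ∀ t : ℝ, ∃ τ₀ ≤ t, ∀ τ ≤ τ₀, U t τ '' Dh τ ⊆ D₀ t)
    (hac : ∀ t : ℝ, ∀ (τn : ℕ → ℝ) (xn : ℕ → X),
      (∀ n, τn n ≤ t) → Tendsto τn atTop atBot → (∀ n, xn n ∈ D₀ (τn n)) →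
      IsCompact (closure (Set.range fun n => U t (τn n) (xn n))))
    {t : ℝ} {w : ℕ → X}
    (hw : ∀ n, ∃ Dh ∈ 𝒟, w n ∈ pullbackOmega U Dh t) :
    ∃ (z : X) (φ : ℕ → ℕ), StrictMono φ ∧ Tendsto (w ∘ φ) atTop (𝓝 z) := by
  have h : ∀ n : ℕ, ∃ (p : ℝ) (q : X), p ≤ t ∧ p ≤ -(n : ℝ) ∧ q ∈ D₀ p ∧
      dist (U t p q) (w n) < 1 / ((n : ℝ) + 1) := by
    intro n
    obtain ⟨Dh, hD, hwn⟩ := hw n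
    obtain ⟨r, σ', x', x'', hrτ, hrk, hx', _, _, _, _, hconv⟩ :=
      mem_K hcomp habs hD (le_refl t) hwn
    obtain ⟨K, hK⟩ := eventually_atTop.mp
      (Metric.tendsto_nhds.mp hconv (1 / ((n : ℝ) + 1)) (by positivity))
    refine ⟨r (max n K), x' (max n K), hrτ _, ?_, hx' _, hK _ (le_max_right _ _)⟩
    exact (hrk _).trans (by exact_mod_cast neg_le_neg (by exact_mod_cast le_max_left n K))
  choose p q hpt hpn hq hd using h
  have hpb : Tendsto p atTop atBot :=
    tendsto_atBot_mono hpn (tendsto_neg_atTop_atBot.comp tendsto_natCast_atTop_atTop)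
  have hK := hac t p q hpt hpb hq
  obtain ⟨z, _, φ, hφ, hφconv⟩ :=
    hK.tendsto_subseq (x := fun n => U t (p n) (q n))
      (fun n => subset_closure (Set.mem_range_self n))
  refine ⟨z, φ, hφ, ?_⟩
  refine hφconv.congr_dist ?_
  refine squeeze_zero (fun j => dist_nonneg) (fun j => ?_)
    tendsto_one_div_add_atTop_nhds_zero_nat
  calc dist (U t (p (φ j)) (q (φ j))) (w (φ j)) ≤ 1 / ((φ j : ℝ) + 1) := (hd (φ j)).le
    _ ≤ 1 / ((j : ℝ) + 1) := by
        apply one_div_le_one_div_of_le (by positivity)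
        exact_mod_cast Nat.succ_le_succ hφ.le_apply

end Aux

/-- For a closed process with a pullback `𝒟`-absorbing family `D₀` and pullback
`D̂₀`-asymptotic compactness, the family `A_𝒟(t) = cl(⋃_{D̂ ∈ 𝒟} Λ(D̂,t))` is invariant:
`U(t,τ) A_𝒟(τ) = A_𝒟(t)` for all `τ ≤ t`. -/
theorem pullback_attractor_invariant
    {X : Type*} [MetricSpace X] [CompleteSpace X]
    (U : ℝ → ℝ → X → X)
    (hid : ∀ τ : ℝ, ∀ x : X, U τ τ x = x)
    (hcomp : ∀ ⦃τ s t : ℝ⦄, τ ≤ s → s ≤ t → ∀ x : X, U t s (U s τ x) = U t τ x)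
    -- U is a closed process
    (hclosed : ∀ ⦃τ t : ℝ⦄, τ ≤ t → ∀ (xn : ℕ → X) (x y : X),
      Tendsto xn atTop (𝓝 x) → Tendsto (fun n => U t τ (xn n)) atTop (𝓝 y) →
      y = U t τ x)
    (𝒟 : Set (ℝ → Set X)) (h𝒟ne : 𝒟.Nonempty)
    (h𝒟 : ∀ Dh ∈ 𝒟, ∀ t : ℝ, (Dh t).Nonempty)
    (D₀ : ℝ → Set X) (hD₀ : ∀ t : ℝ, (D₀ t).Nonempty)
    -- D₀ is pullback 𝒟-absorbing
    (habs : ∀ Dh ∈ 𝒟, ∀ t : ℝ, ∃ τ₀ ≤ t, ∀ τ ≤ τ₀, U t τ '' Dh τ ⊆ D₀ t)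
    -- U is pullback D̂₀-asymptotically compact
    (hac : ∀ t : ℝ, ∀ (τn : ℕ → ℝ) (xn : ℕ → X),
      (∀ n, τn n ≤ t) → Tendsto τn atTop atBot → (∀ n, xn n ∈ D₀ (τn n)) →
      IsCompact (closure (Set.range fun n => U t (τn n) (xn n)))) :
    ∀ ⦃τ t : ℝ⦄, τ ≤ t →
      U t τ '' closure (⋃ Dh ∈ 𝒟, pullbackOmega U Dh τ)
        = closure (⋃ Dh ∈ 𝒟, pullbackOmega U Dh t) := by
  intro τ t hτt
  apply Set.Subset.antisymm
  · -- ⊆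
    rintro _ ⟨y, hy, rfl⟩
    obtain ⟨yn, hyn, hyconv⟩ := mem_closure_iff_seq_limit.mp hy
    have hyn' : ∀ n, ∃ Dh ∈ 𝒟, yn n ∈ pullbackOmega U Dh τ := by
      intro n
      obtain ⟨Dh, hDm, h⟩ := Set.mem_iUnion₂.mp (hyn n)
      exact ⟨Dh, hDm, h⟩
    have hw : ∀ n, ∃ Dh ∈ 𝒟, U t τ (yn n) ∈ pullbackOmega U Dh t := by
      intro n
      obtain ⟨Dh, hD, hmem⟩ := hyn' n
      exact ⟨Dh, hD, omega_fwd hcomp hclosed habs hac hD hτt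
        (Set.mem_image_of_mem _ hmem)⟩
    obtain ⟨z, φ, hφ, hφconv⟩ := exists_subseq hcomp habs hac hw
    have hz : z ∈ closure (⋃ Dh ∈ 𝒟, pullbackOmega U Dh t) := by
      refine mem_closure_of_tendsto hφconv (Eventually.of_forall fun k => ?_)
      obtain ⟨Dh, hD, hmem⟩ := hw (φ k)
      exact Set.mem_biUnion hD hmem
    have : z = U t τ y :=
      hclosed hτt (fun k => yn (φ k)) y z (hyconv.comp hφ.tendsto_atTop) hφconv
    rwa [← this]
  · -- ⊇
    intro z hz
    obtain ⟨zn, hzn, hzconv⟩ := mem_closure_iff_seq_limit.mp hz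
    have hzn' : ∀ n, ∃ Dh ∈ 𝒟, zn n ∈ pullbackOmega U Dh t := by
      intro n
      obtain ⟨Dh, hDm, h⟩ := Set.mem_iUnion₂.mp (hzn n)
      exact ⟨Dh, hDm, h⟩
    have hy : ∀ n, ∃ (y : X) (Dh : ℝ → Set X), Dh ∈ 𝒟 ∧
        y ∈ pullbackOmega U Dh τ ∧ U t τ y = zn n := by
      intro n
      obtain ⟨Dh, hD, hmem⟩ := hzn' n
      obtain ⟨y, hy, hUy⟩ := omega_bwd hcomp hclosed habs hac hD hτt hmem
      exact ⟨y, Dh, hD, hy, hUy⟩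
    choose y Dh hD hymem hUy using hy
    obtain ⟨ylim, φ, hφ, hφconv⟩ := exists_subseq hcomp habs hac
      (w := y) (t := τ) (fun n => ⟨Dh n, hD n, hymem n⟩)
    have hylim : ylim ∈ closure (⋃ Dh ∈ 𝒟, pullbackOmega U Dh τ) := by
      refine mem_closure_of_tendsto hφconv (Eventually.of_forall fun k => ?_)
      exact Set.mem_biUnion (hD (φ k)) (hymem (φ k))
    have hzU : z = U t τ ylim := by
      refine hclosed hτt (fun k => y (φ k)) ylim z hφconv ?_
      have : (fun k => U t τ (y (φ k))) = fun k => zn (φ k) := by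
        funext k; exact hUy (φ k)
      rw [this]
      exact hzconv.comp hφ.tendsto_atTop
    exact ⟨ylim, hylim, hzU.symm⟩
end

section
/- Let X be a complete metric space, U a closed process on X, and D a universe in X. Suppose there is a family D̂₀ = {D₀(t) : t ∈ ℝ} of nonempty subsets of X which is pullback D-absorbing for U, U is pullback D̂₀-asymptotically compact, and moreover D̂₀ ∈ D. Then for every t ∈ ℝ, A_D(t) = Λ(D̂₀,t) and A_D(t) ⊆ cl(D₀(t)), where A_D(t) = cl(⋃_{D̂∈D} Λ(D̂,t)). -/
open Filter Topology

/-- For a closed process with pullback `𝒟`-absorbing family `D₀ ∈ 𝒟` and pullback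
`D̂₀`-asymptotic compactness, the attractor satisfies `A_𝒟(t) = Λ(D̂₀,t) ⊆ cl(D₀(t))`. -/
theorem pullback_attractor_eq_omega_of_absorbing_in_universe
    {X : Type*} [MetricSpace X] [CompleteSpace X]
    (U : ℝ → ℝ → X → X)
    (hid : ∀ τ : ℝ, ∀ x : X, U τ τ x = x)
    (hcomp : ∀ ⦃τ s t : ℝ⦄, τ ≤ s → s ≤ t → ∀ x : X, U t s (U s τ x) = U t τ x)
    -- U is a closed process
    (hclosed : ∀ ⦃τ t : ℝ⦄, τ ≤ t → ∀ (xn : ℕ → X) (x y : X),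
      Tendsto xn atTop (𝓝 x) → Tendsto (fun n => U t τ (xn n)) atTop (𝓝 y) →
      y = U t τ x)
    (𝒟 : Set (ℝ → Set X)) (h𝒟ne : 𝒟.Nonempty)
    (h𝒟 : ∀ Dh ∈ 𝒟, ∀ t : ℝ, (Dh t).Nonempty)
    (D₀ : ℝ → Set X) (hD₀ : ∀ t : ℝ, (D₀ t).Nonempty)
    (hD₀mem : D₀ ∈ 𝒟)
    -- D₀ is pullback 𝒟-absorbing
    (habs : ∀ Dh ∈ 𝒟, ∀ t : ℝ, ∃ τ₀ ≤ t, ∀ τ ≤ τ₀, U t τ '' Dh τ ⊆ D₀ t)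
    -- U is pullback D̂₀-asymptotically compact
    (hac : ∀ t : ℝ, ∀ (τn : ℕ → ℝ) (xn : ℕ → X),
      (∀ n, τn n ≤ t) → Tendsto τn atTop atBot → (∀ n, xn n ∈ D₀ (τn n)) →
      IsCompact (closure (Set.range fun n => U t (τn n) (xn n)))) :
    ∀ t : ℝ,
      closure (⋃ Dh ∈ 𝒟, pullbackOmega U Dh t) = pullbackOmega U D₀ t ∧
      closure (⋃ Dh ∈ 𝒟, pullbackOmega U Dh t) ⊆ closure (D₀ t) := by
  intro t
  have key : ∀ Dh ∈ 𝒟, pullbackOmega U Dh t ⊆ pullbackOmega U D₀ t := by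
    intro Dh hDh y hy
    simp only [pullbackOmega, Set.mem_iInter, Set.mem_Iic] at hy ⊢
    intro s hs
    obtain ⟨τ₀, hτ₀s, habs'⟩ := habs Dh hDh s
    refine closure_mono ?_ (hy τ₀ (hτ₀s.trans hs))
    intro z hz
    simp only [Set.mem_iUnion, Set.mem_Iic] at hz ⊢
    obtain ⟨τ, hτ, x, hx, rfl⟩ := hz
    refine ⟨s, le_refl s, U s τ x, habs' τ hτ ⟨x, hx, rfl⟩, ?_⟩
    exact hcomp (hτ.trans hτ₀s) hs x
  have eq1 : closure (⋃ Dh ∈ 𝒟, pullbackOmega U Dh t) = pullbackOmega U D₀ t := by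
    apply Set.Subset.antisymm
    · refine closure_minimal (Set.iUnion₂_subset key) ?_
      exact isClosed_iInter fun s => isClosed_iInter fun _ => isClosed_closure
    · exact (Set.subset_iUnion₂ (s := fun Dh _ => pullbackOmega U Dh t) D₀ hD₀mem).trans subset_closure
  refine ⟨eq1, eq1 ▸ ?_⟩
  obtain ⟨τ₀, hτ₀t, habs'⟩ := habs D₀ hD₀mem t
  intro y hy
  simp only [pullbackOmega, Set.mem_iInter, Set.mem_Iic] at hy
  refine closure_mono ?_ (hy τ₀ hτ₀t)
  intro z hz
  simp only [Set.mem_iUnion, Set.mem_Iic] at hz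
  obtain ⟨τ, hτ, hz⟩ := hz
  exact habs' τ hτ hz
end

section
/- Let X be a complete metric space, U a closed process on X, and D a universe in X. Suppose there is a family D̂₀ = {D₀(t) : t ∈ ℝ} of nonempty subsets of X which is pullback D-absorbing for U, and U is pullback D̂₀-asymptotically compact. The family A_D(t) = cl(⋃_{D̂∈D} Λ(D̂,t)) is minimal among pullback D-attracting families of closed sets: if Ĉ = {C(t) : t ∈ ℝ} is any family of closed subsets of X such that lim_{τ→−∞} dist(U(t,τ)D(τ), C(t)) = 0 for every D̂ ∈ D and every t ∈ ℝ, then A_D(t) ⊆ C(t) for every t ∈ ℝ. -/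
open Filter Topology

/-!
A point of `Λ(D̂,t)` is a limit of points `U(t,τ)x` with `τ` arbitrarily negative, and the
semidistance from these to `C(t)` tends to `0`; so `Λ(D̂,t)` lies within semidistance
`limsup_{τ → -∞} dist(U(t,τ)D(τ), C(t)) = 0` of the closed set `C(t)`, i.e. inside it.
-/

section Semidist

variable {X : Type*} [MetricSpace X]

theorem semidist_mono_left {A A' : Set X} (h : A ⊆ A') (B : Set X) :
    semidist A B ≤ semidist A' B :=
  biSup_mono fun _ ha => h ha

theorem semidist_closure_left (A B : Set X) : semidist (closure A) B = semidist A B := by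
  refine le_antisymm (iSup₂_le fun a ha => ?_) (semidist_mono_left subset_closure B)
  have hclosed : IsClosed {x | Metric.infEDist x B ≤ semidist A B} :=
    isClosed_le Metric.continuous_infEDist continuous_const
  exact closure_minimal
    (fun x hx => le_iSup₂ (f := fun x (_ : x ∈ A) => Metric.infEDist x B) x hx) hclosed ha

theorem semidist_biUnion {ι : Type*} (s : Set ι) (A : ι → Set X) (B : Set X) :
    semidist (⋃ i ∈ s, A i) B = ⨆ i ∈ s, semidist (A i) B := by
  simp only [semidist, iSup_iUnion]

theorem semidist_eq_zero_iff_subset_closure {A B : Set X} :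
    semidist A B = 0 ↔ A ⊆ closure B := by
  simp only [semidist, ENNReal.iSup_eq_zero, Set.subset_def,
    Metric.mem_closure_iff_infEDist_zero]
  -- `semidist` is written with the alias `EMetric.infEdist` of `Metric.infEDist`
  rfl

end Semidist

theorem pullbackOmega_subset_closure_iUnion {X : Type*} [TopologicalSpace X]
    (U : ℝ → ℝ → X → X) (Dh : ℝ → Set X) (t s : ℝ) :
    pullbackOmega U Dh t ⊆ closure (⋃ τ ∈ Set.Iic s, U t τ '' Dh τ) :=
  (Set.biInter_subset_of_mem (Set.mem_Iic.2 (min_le_right s t))).trans <|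
    closure_mono <| Set.biUnion_subset_biUnion_left <| Set.Iic_subset_Iic.2 (min_le_left s t)

theorem semidist_pullbackOmega_le_limsup {X : Type*} [MetricSpace X]
    (U : ℝ → ℝ → X → X) (Dh : ℝ → Set X) (t : ℝ) (C : Set X) :
    semidist (pullbackOmega U Dh t) C ≤ limsup (fun τ => semidist (U t τ '' Dh τ) C) atBot := by
  rw [atBot_basis.limsup_eq_iInf_iSup]
  refine le_iInf fun s => le_iInf fun _ => ?_
  calc semidist (pullbackOmega U Dh t) C
      ≤ semidist (closure (⋃ τ ∈ Set.Iic s, U t τ '' Dh τ)) C :=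
        semidist_mono_left (pullbackOmega_subset_closure_iUnion U Dh t s) C
    _ = ⨆ τ ∈ Set.Iic s, semidist (U t τ '' Dh τ) C := by
        rw [semidist_closure_left, semidist_biUnion]

theorem pullbackOmega_subset_closure_of_tendsto_semidist {X : Type*} [MetricSpace X]
    {U : ℝ → ℝ → X → X} {Dh : ℝ → Set X} {t : ℝ} {C : Set X}
    (hattr : Tendsto (fun τ => semidist (U t τ '' Dh τ) C) atBot (𝓝 0)) :
    pullbackOmega U Dh t ⊆ closure C := by
  refine semidist_eq_zero_iff_subset_closure.1 (le_antisymm ?_ zero_le)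
  exact (semidist_pullbackOmega_le_limsup U Dh t C).trans_eq hattr.limsup_eq

theorem pullback_attractor_minimal_general
    {X : Type*} [MetricSpace X]
    (U : ℝ → ℝ → X → X)
    (𝒟 : Set (ℝ → Set X))
    -- Ĉ is a family of closed sets which pullback 𝒟-attracts
    (C : ℝ → Set X) (hCclosed : ∀ t : ℝ, IsClosed (C t))
    (hCattr : ∀ Dh ∈ 𝒟, ∀ t : ℝ,
      Tendsto (fun τ => semidist (U t τ '' Dh τ) (C t)) atBot (𝓝 0)) :
    ∀ t : ℝ, closure (⋃ Dh ∈ 𝒟, pullbackOmega U Dh t) ⊆ C t := by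
  intro t
  refine (hCclosed t).closure_subset_iff.2 (Set.iUnion₂_subset fun Dh hDh => ?_)
  rw [← (hCclosed t).closure_eq]
  exact pullbackOmega_subset_closure_of_tendsto_semidist (hCattr Dh hDh t)

/-- Minimality of the pullback `𝒟`-attractor: if `Ĉ` is a family of closed sets which
pullback `𝒟`-attracts, then `A_𝒟(t) = cl(⋃_{D̂ ∈ 𝒟} Λ(D̂,t)) ⊆ C(t)` for all `t`. -/
theorem pullback_attractor_minimal
    {X : Type*} [MetricSpace X] [CompleteSpace X]
    (U : ℝ → ℝ → X → X)
    (hid : ∀ τ : ℝ, ∀ x : X, U τ τ x = x)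
    (hcomp : ∀ ⦃τ s t : ℝ⦄, τ ≤ s → s ≤ t → ∀ x : X, U t s (U s τ x) = U t τ x)
    -- U is a closed process
    (hclosed : ∀ ⦃τ t : ℝ⦄, τ ≤ t → ∀ (xn : ℕ → X) (x y : X),
      Tendsto xn atTop (𝓝 x) → Tendsto (fun n => U t τ (xn n)) atTop (𝓝 y) →
      y = U t τ x)
    (𝒟 : Set (ℝ → Set X)) (h𝒟ne : 𝒟.Nonempty)
    (h𝒟 : ∀ Dh ∈ 𝒟, ∀ t : ℝ, (Dh t).Nonempty)
    (D₀ : ℝ → Set X) (hD₀ : ∀ t : ℝ, (D₀ t).Nonempty)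
    -- D₀ is pullback 𝒟-absorbing
    (habs : ∀ Dh ∈ 𝒟, ∀ t : ℝ, ∃ τ₀ ≤ t, ∀ τ ≤ τ₀, U t τ '' Dh τ ⊆ D₀ t)
    -- U is pullback D̂₀-asymptotically compact
    (hac : ∀ t : ℝ, ∀ (τn : ℕ → ℝ) (xn : ℕ → X),
      (∀ n, τn n ≤ t) → Tendsto τn atTop atBot → (∀ n, xn n ∈ D₀ (τn n)) →
      IsCompact (closure (Set.range fun n => U t (τn n) (xn n))))
    -- Ĉ is a family of closed sets which pullback 𝒟-attracts
    (C : ℝ → Set X) (hCclosed : ∀ t : ℝ, IsClosed (C t))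
    (hCattr : ∀ Dh ∈ 𝒟, ∀ t : ℝ,
      Tendsto (fun τ => semidist (U t τ '' Dh τ) (C t)) atBot (𝓝 0)) :
    ∀ t : ℝ, closure (⋃ Dh ∈ 𝒟, pullbackOmega U Dh t) ⊆ C t :=
  pullback_attractor_minimal_general U 𝒟 C hCclosed hCattr
end

section
/- Let X be a complete metric space and, for each ε ∈ [0,1), let U_ε be a process on X such that: (i) U_ε has a pullback attractor A_ε(·), i.e. a family of nonempty compact subsets of X which is invariant (U_ε(t,τ)A_ε(τ) = A_ε(t) for τ ≤ t) and pullback attracts every bounded subset of X (lim_{τ→−∞} dist(U_ε(t,τ)B, A_ε(t)) = 0 for every bounded B ⊆ X and every t ∈ ℝ); (ii) for every t ∈ ℝ, T ≥ 0 and every bounded set D ⊆ X, sup_{s∈[0,T]} sup_{u₀∈D} d(U_ε(t+s,t)u₀, U_0(t+s,t)u₀) → 0 as ε → 0⁺; (iii) there exist δ > 0 and t₀ ∈ ℝ such that ⋃_{ε∈(0,δ)} ⋃_{s≤t₀} A_ε(s) is bounded in X. Then the attractors are upper semicontinuous at ε = 0: for every t ∈ ℝ, lim_{ε→0⁺} dist(A_ε(t),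 A_0(t)) = 0. -/
open Filter Topology

/-- Upper semicontinuity of pullback attractors at `ε = 0` for a family of processes
`U ε` (ε ∈ [0,1)) with pullback attractors `A ε`, under the convergence of processes on
bounded sets and a uniform boundedness condition on the attractors. -/
theorem pullback_attractors_upper_semicontinuous
    {X : Type*} [MetricSpace X] [CompleteSpace X]
    (U : ℝ → ℝ → ℝ → X → X)
    (hid : ∀ ε ∈ Set.Ico (0:ℝ) 1, ∀ τ : ℝ, ∀ x : X, U ε τ τ x = x)
    (hcomp : ∀ ε ∈ Set.Ico (0:ℝ) 1, ∀ ⦃τ s t : ℝ⦄, τ ≤ s → s ≤ t →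
      ∀ x : X, U ε t s (U ε s τ x) = U ε t τ x)
    (A : ℝ → ℝ → Set X)
    -- (i) each U ε has a pullback attractor A ε
    (hA : ∀ ε ∈ Set.Ico (0:ℝ) 1,
      (∀ t : ℝ, (A ε t).Nonempty ∧ IsCompact (A ε t)) ∧
      (∀ ⦃τ t : ℝ⦄, τ ≤ t → U ε t τ '' A ε τ = A ε t) ∧
      (∀ B : Set X, Bornology.IsBounded B → ∀ t : ℝ,
        Tendsto (fun τ => semidist (U ε t τ '' B) (A ε t)) atBot (𝓝 0)))
    -- (ii) convergence of the processes on bounded sets, uniformly on compact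
    -- time intervals, as ε → 0⁺
    (hconv : ∀ t : ℝ, ∀ T : ℝ, 0 ≤ T → ∀ D : Set X, Bornology.IsBounded D →
      ∀ δ : ℝ, 0 < δ → ∃ ε₀ > (0:ℝ), ∀ ε : ℝ, 0 < ε → ε < ε₀ →
        ∀ s ∈ Set.Icc (0:ℝ) T, ∀ u₀ ∈ D,
          dist (U ε (t + s) t u₀) (U 0 (t + s) t u₀) < δ)
    -- (iii) uniform boundedness of the attractors
    (hbdd : ∃ δ > (0:ℝ), ∃ t₀ : ℝ,
      Bornology.IsBounded (⋃ ε ∈ Set.Ioo (0:ℝ) δ, ⋃ s ∈ Set.Iic t₀, A ε s)) :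
    ∀ t : ℝ,
      Tendsto (fun ε => semidist (A ε t) (A 0 t)) (nhdsWithin 0 (Set.Ioi 0)) (𝓝 0) := by
  obtain ⟨δ, hδ, t₀, hB⟩ := hbdd
  set B : Set X := ⋃ ε ∈ Set.Ioo (0:ℝ) δ, ⋃ s ∈ Set.Iic t₀, A ε s with hBdef
  intro t
  rw [ENNReal.tendsto_nhds_zero]
  intro η hη
  obtain ⟨r, hr, hrη⟩ : ∃ r : ℝ, 0 < r ∧ ENNReal.ofReal r ≤ η := by
    rcases eq_or_ne η ⊤ with h | h
    · exact ⟨1, one_pos, by simp [h]⟩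
    · exact ⟨η.toReal, ENNReal.toReal_pos hη.ne' h, by
        simp [ENNReal.ofReal_toReal h]⟩
  obtain ⟨h0c, h0inv, h0attr⟩ := hA 0 ⟨le_refl 0, one_pos⟩
  have h2 : (0:ENNReal) < ENNReal.ofReal (r/2) := ENNReal.ofReal_pos.mpr (by linarith)
  have hev : ∀ᶠ τ in atBot, semidist (U 0 t τ '' B) (A 0 t) < ENNReal.ofReal (r/2) :=
    (h0attr B hB t).eventually (Iio_mem_nhds h2)
  obtain ⟨τ, hτsm, hτle⟩ := ((eventually_le_atBot (min t₀ t)).and hev).exists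
  have hτt₀ : τ ≤ t₀ := hτsm.trans (min_le_left _ _)
  have hτt : τ ≤ t := hτsm.trans (min_le_right _ _)
  obtain ⟨ε₀, hε₀, hc⟩ := hconv τ (t - τ) (by linarith) B hB (r/2) (by linarith)
  set c := min ε₀ (min δ 1) with hcdef
  have hcpos : 0 < c := lt_min hε₀ (lt_min hδ one_pos)
  filter_upwards [Ioo_mem_nhdsGT_of_mem (Set.left_mem_Ico.mpr hcpos)] with ε hε
  have hεpos := hε.1
  have hεε₀ : ε < ε₀ := hε.2.trans_le (min_le_left _ _)
  have hεδ : ε < δ := hε.2.trans_le ((min_le_right _ _).trans (min_le_left _ _))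
  have hε1 : ε < 1 := hε.2.trans_le ((min_le_right _ _).trans (min_le_right _ _))
  obtain ⟨hεc, hεinv, _⟩ := hA ε ⟨hεpos.le, hε1⟩
  have hinv : U ε t τ '' A ε τ = A ε t := hεinv hτt
  calc semidist (A ε t) (A 0 t) ≤ ENNReal.ofReal r := by
        rw [semidist]
        apply iSup₂_le
        intro a ha
        rw [← hinv] at ha
        obtain ⟨x, hx, rfl⟩ := ha
        have hxB : x ∈ B := Set.mem_biUnion ⟨hεpos, hεδ⟩ (Set.mem_biUnion hτt₀ hx)
        have hd : dist (U ε t τ x) (U 0 t τ x) < r/2 := by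
          have := hc ε hεpos hεε₀ (t - τ) ⟨by linarith, le_refl _⟩ x hxB
          rwa [show τ + (t - τ) = t by ring] at this
        have h1 : EMetric.infEdist (U 0 t τ x) (A 0 t) < ENNReal.ofReal (r/2) := by
          refine lt_of_le_of_lt ?_ hτle
          rw [semidist]
          exact le_biSup (fun a => EMetric.infEdist a (A 0 t)) (Set.mem_image_of_mem _ hxB)
        calc EMetric.infEdist (U ε t τ x) (A 0 t)
            ≤ edist (U ε t τ x) (U 0 t τ x) + EMetric.infEdist (U 0 t τ x) (A 0 t) :=
              EMetric.infEdist_le_edist_add_infEdist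
          _ ≤ ENNReal.ofReal (r/2) + ENNReal.ofReal (r/2) := by
              refine add_le_add ?_ h1.le
              rw [edist_dist]; exact ENNReal.ofReal_le_ofReal hd.le
          _ = ENNReal.ofReal r := by
              rw [← ENNReal.ofReal_add (by linarith) (by linarith), add_halves]
    _ ≤ η := hrη
end

section
/- Let X be a complete metric space, let S(τ), τ ≥ 0, be a semigroup on X possessing a global attractor A₀ (a nonempty compact set with S(τ)A₀ = A₀ for all τ ≥ 0 which attracts every bounded set: dist(S(τ)B, A₀) → 0 as τ → ∞ for all bounded B ⊆ X), and for each ε ∈ (0,ε₀] let U_ε be a process on X possessing a pullback attractor A_ε(·) (a family of nonempty compact sets, invariant under U_ε and pullback attracting every bounded subset of X). Assume (H₁): for every t ∈ ℝ, τ ≥ 0 and every bounded set B ⊆ X, sup_{x∈B} d(U_ε(t,t−τ)x, S(τ)x) → 0 as ε → 0⁺; and (H₂): there exists a compact set K ⊆ X such that lim_{ε→0⁺} dist(A_ε(t), K) = 0 for every t ∈ ℝ. Then the pullback attractors are upper semicontinuous to the global attractor: lim_{ε→0⁺} dist(A_ε(t), A₀) = 0 for every t ∈ ℝ. -/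
open Filter Topology

/-- Upper semicontinuity of the pullback attractors `A ε` of the perturbed processes
`U ε` (ε ∈ (0,ε₀]) towards the global attractor `A₀` of the limit semigroup `S`, under
(H₁) convergence of processes to the semigroup on bounded sets, and (H₂) collapse of
the attractors onto a fixed compact set. -/
theorem pullback_attractors_upper_semicontinuous_to_global_attractor
    {X : Type*} [MetricSpace X] [CompleteSpace X]
    -- the limit semigroup S with global attractor A₀
    (S : ℝ → X → X)
    (hS0 : ∀ x : X, S 0 x = x)
    (hSadd : ∀ ⦃τ₁ τ₂ : ℝ⦄, 0 ≤ τ₁ → 0 ≤ τ₂ → ∀ x : X, S (τ₁ + τ₂) x = S τ₁ (S τ₂ x))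
    (A₀ : Set X) (hA₀ne : A₀.Nonempty) (hA₀cpt : IsCompact A₀)
    (hA₀inv : ∀ ⦃τ : ℝ⦄, 0 ≤ τ → S τ '' A₀ = A₀)
    (hA₀attr : ∀ B : Set X, Bornology.IsBounded B →
      Tendsto (fun τ => semidist (S τ '' B) A₀) atTop (𝓝 0))
    -- the perturbed processes U ε, ε ∈ (0, ε₀], with pullback attractors A ε
    (ε₀ : ℝ) (hε₀ : 0 < ε₀)
    (U : ℝ → ℝ → ℝ → X → X)
    (hid : ∀ ε ∈ Set.Ioc (0:ℝ) ε₀, ∀ τ : ℝ, ∀ x : X, U ε τ τ x = x)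
    (hcomp : ∀ ε ∈ Set.Ioc (0:ℝ) ε₀, ∀ ⦃τ s t : ℝ⦄, τ ≤ s → s ≤ t →
      ∀ x : X, U ε t s (U ε s τ x) = U ε t τ x)
    (A : ℝ → ℝ → Set X)
    (hA : ∀ ε ∈ Set.Ioc (0:ℝ) ε₀,
      (∀ t : ℝ, (A ε t).Nonempty ∧ IsCompact (A ε t)) ∧
      (∀ ⦃τ t : ℝ⦄, τ ≤ t → U ε t τ '' A ε τ = A ε t) ∧
      (∀ B : Set X, Bornology.IsBounded B → ∀ t : ℝ,
        Tendsto (fun τ => semidist (U ε t τ '' B) (A ε t)) atBot (𝓝 0)))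
    -- (H₁): U ε (t, t-τ) x → S τ x as ε → 0⁺, uniformly on bounded sets
    (hH1 : ∀ t : ℝ, ∀ ⦃τ : ℝ⦄, 0 ≤ τ → ∀ B : Set X, Bornology.IsBounded B →
      ∀ δ : ℝ, 0 < δ → ∃ ε₁ > (0:ℝ), ∀ ε : ℝ, 0 < ε → ε ≤ ε₀ → ε < ε₁ →
        ∀ x ∈ B, dist (U ε t (t - τ) x) (S τ x) < δ)
    -- (H₂): there is a compact set K with dist(A ε t, K) → 0 as ε → 0⁺
    (hH2 : ∃ K : Set X, IsCompact K ∧ ∀ t : ℝ,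
      Tendsto (fun ε => semidist (A ε t) K) (nhdsWithin 0 (Set.Ioi 0)) (𝓝 0)) :
    ∀ t : ℝ,
      Tendsto (fun ε => semidist (A ε t) A₀) (nhdsWithin 0 (Set.Ioi 0)) (𝓝 0) := by
  obtain ⟨K, hKcpt, hK2⟩ := hH2
  intro t
  rw [ENNReal.tendsto_nhds_zero]
  intro e he
  obtain ⟨δ, hδpos, hδle⟩ : ∃ δ : ℝ, 0 < δ ∧ ENNReal.ofReal δ ≤ e := by
    rcases eq_or_ne e ⊤ with h | h
    · exact ⟨1, one_pos, by simp [h]⟩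
    · exact ⟨e.toReal, ENNReal.toReal_pos he.ne' h,
        le_of_eq (ENNReal.ofReal_toReal h)⟩
  set B : Set X := Metric.cthickening 1 K with hBdef
  have hBbdd : Bornology.IsBounded B := hKcpt.isBounded.cthickening
  -- choose τ ≥ 0 with semidist (S τ '' B) A₀ < ofReal (δ/2)
  have h1a : ∀ᶠ τ in atTop, semidist (S τ '' B) A₀ < ENNReal.ofReal (δ / 2) :=
    (hA₀attr B hBbdd) (Iio_mem_nhds (ENNReal.ofReal_pos.mpr (by positivity)))
  obtain ⟨τ, hτB, hτ0⟩ := (h1a.and (eventually_ge_atTop 0)).exists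
  -- H₁ gives ε₁
  obtain ⟨ε₁, hε₁pos, hε₁⟩ := hH1 t hτ0 B hBbdd (δ / 2) (by positivity)
  -- eventually-in-ε facts
  have hev1 : ∀ᶠ ε in nhdsWithin (0:ℝ) (Set.Ioi 0), ε ∈ Set.Ioi (0:ℝ) :=
    eventually_mem_nhdsWithin
  have hev2 : ∀ᶠ ε in nhdsWithin (0:ℝ) (Set.Ioi 0), ε < ε₀ :=
    eventually_nhdsWithin_of_eventually_nhds (Filter.Tendsto.eventually_lt_const hε₀
      Filter.tendsto_id)
  have hev3 : ∀ᶠ ε in nhdsWithin (0:ℝ) (Set.Ioi 0), ε < ε₁ :=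
    eventually_nhdsWithin_of_eventually_nhds (Filter.Tendsto.eventually_lt_const hε₁pos
      Filter.tendsto_id)
  have hev4 : ∀ᶠ ε in nhdsWithin (0:ℝ) (Set.Ioi 0),
      semidist (A ε (t - τ)) K < 1 :=
    (hK2 (t - τ)) (Iio_mem_nhds (by norm_num))
  filter_upwards [hev1, hev2, hev3, hev4] with ε hpos hlt0 hlt1 hsmall
  have hεIoc : ε ∈ Set.Ioc (0:ℝ) ε₀ := ⟨hpos, hlt0.le⟩
  -- invariance
  have hinv : U ε t (t - τ) '' A ε (t - τ) = A ε t :=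
    (hA ε hεIoc).2.1 (sub_le_self t hτ0)
  calc semidist (A ε t) A₀ ≤ ENNReal.ofReal δ := by
        rw [← hinv]
        unfold semidist
        refine iSup₂_le fun y hy => ?_
        obtain ⟨a, ha, rfl⟩ := hy
        have haB : a ∈ B := by
          have h1 : EMetric.infEdist a K ≤ semidist (A ε (t - τ)) K :=
            le_iSup₂ (f := fun a (_ : a ∈ A ε (t - τ)) => EMetric.infEdist a K) a ha
          have h2 : EMetric.infEdist a K ≤ ENNReal.ofReal 1 := by
            rw [ENNReal.ofReal_one]
            exact h1.trans hsmall.le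
          exact (Metric.mem_cthickening_iff).mpr h2
        have hd : dist (U ε t (t - τ) a) (S τ a) < δ / 2 :=
          hε₁ ε hpos hlt0.le hlt1 a haB
        have hed : edist (U ε t (t - τ) a) (S τ a) ≤ ENNReal.ofReal (δ / 2) := by
          rw [edist_dist]
          exact ENNReal.ofReal_le_ofReal hd.le
        have hinf : EMetric.infEdist (S τ a) A₀ ≤ ENNReal.ofReal (δ / 2) := by
          have : EMetric.infEdist (S τ a) A₀ ≤ semidist (S τ '' B) A₀ :=
            le_iSup₂ (f := fun y (_ : y ∈ S τ '' B) => EMetric.infEdist y A₀)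
              (S τ a) ⟨a, haB, rfl⟩
          exact this.trans hτB.le
        calc EMetric.infEdist (U ε t (t - τ) a) A₀
            ≤ edist (U ε t (t - τ) a) (S τ a) + EMetric.infEdist (S τ a) A₀ :=
              EMetric.infEdist_le_edist_add_infEdist
          _ ≤ ENNReal.ofReal (δ / 2) + ENNReal.ofReal (δ / 2) := add_le_add hed hinf
          _ = ENNReal.ofReal δ := by
              rw [← ENNReal.ofReal_add (by positivity) (by positivity)]
              norm_num
    _ ≤ e := hδle
end

section
/- Let X be a normed space, p ≥ 1, and let g : ℝ → X be strongly measurable with ‖g(·)‖^p locally integrable. Fix τ ∈ ℝ, h > 0 and α > 0. Then g is pullback translation bounded relative to τ and h if and only if g is pullback tempered relative to τ and α, i.e. sup_{s ≤ τ} ∫_{s−h}^{s} ‖g(r)‖^p dr < ∞ if and only if sup_{s ≤ τ} ∫_{−∞}^{s} e^{α(r−s)} ‖g(r)‖^p dr < ∞. -/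
open MeasureTheory Filter

/-- Equivalence of pullback translation boundedness and pullback temperedness:
`sup_{s ≤ τ} ∫_{s-h}^{s} ‖g r‖^p dr < ∞` iff
`sup_{s ≤ τ} ∫_{-∞}^{s} e^{α(r-s)} ‖g r‖^p dr < ∞`. -/
theorem pullback_translation_bounded_iff_pullback_tempered
    {X : Type*} [NormedAddCommGroup X]
    (p : ℝ) (hp : 1 ≤ p) (g : ℝ → X)
    (hg : StronglyMeasurable g)
    (hloc : LocallyIntegrable (fun r => ‖g r‖ ^ p) volume)
    (τ h α : ℝ) (hh : 0 < h) (hα : 0 < α) :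
    ((⨆ s ∈ Set.Iic τ, ∫⁻ r in Set.Ioc (s - h) s, ENNReal.ofReal (‖g r‖ ^ p)) < ⊤)
      ↔ ((⨆ s ∈ Set.Iic τ,
            ∫⁻ r in Set.Iic s, ENNReal.ofReal (Real.exp (α * (r - s)) * ‖g r‖ ^ p)) < ⊤) := by
  classical
  set M := ⨆ s ∈ Set.Iic τ, ∫⁻ r in Set.Ioc (s - h) s, ENNReal.ofReal (‖g r‖ ^ p) with hMdef
  set S := ⨆ s ∈ Set.Iic τ,
      ∫⁻ r in Set.Iic s, ENNReal.ofReal (Real.exp (α * (r - s)) * ‖g r‖ ^ p) with hSdef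
  set c : ENNReal := ENNReal.ofReal (Real.exp (-(α * h))) with hcdef
  have hc1 : c < 1 := by
    rw [hcdef, ← ENNReal.ofReal_one]
    exact ENNReal.ofReal_lt_ofReal_iff_of_nonneg (Real.exp_nonneg _) |>.mpr
      (by rw [← Real.exp_zero]; exact Real.exp_lt_exp.mpr (by nlinarith))
  constructor
  · intro H
    have key : ∀ s ∈ Set.Iic τ,
        (∫⁻ r in Set.Iic s, ENNReal.ofReal (Real.exp (α * (r - s)) * ‖g r‖ ^ p))
          ≤ (1 - c)⁻¹ * M := by
      intro s hs
      have hsub : Set.Iic s ⊆ ⋃ n : ℕ, Set.Ioc (s - (n + 1) * h) (s - n * h) := by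
        intro r hr
        have hex : ∃ n : ℕ, s - (n + 1 : ℕ) * h < r := by
          obtain ⟨n, hn⟩ := exists_nat_gt ((s - r) / h)
          refine ⟨n, ?_⟩
          have := (div_lt_iff₀ hh).mp hn
          push_cast
          nlinarith
        set n := Nat.find hex with hn
        have h1 : s - (n + 1 : ℕ) * h < r := Nat.find_spec hex
        have h2 : r ≤ s - n * h := by
          rcases Nat.eq_zero_or_pos n with h0 | h0
          · simpa [h0] using hr
          · have := Nat.find_min hex (m := n - 1) (by omega)
            push_cast at this ⊢
            have hn1 : ((n - 1 : ℕ) : ℝ) + 1 = n := by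
              have : (1 : ℕ) ≤ n := h0
              push_cast [Nat.cast_sub this]
              ring
            rw [hn1] at this
            linarith
        refine Set.mem_iUnion.mpr ⟨n, ?_, h2⟩
        push_cast at h1 ⊢
        linarith
      calc ∫⁻ r in Set.Iic s, ENNReal.ofReal (Real.exp (α * (r - s)) * ‖g r‖ ^ p)
          ≤ ∫⁻ r in ⋃ n : ℕ, Set.Ioc (s - (n + 1) * h) (s - n * h),
              ENNReal.ofReal (Real.exp (α * (r - s)) * ‖g r‖ ^ p) :=
            lintegral_mono_set hsub
        _ ≤ ∑' n : ℕ, ∫⁻ r in Set.Ioc (s - (n + 1) * h) (s - n * h),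
              ENNReal.ofReal (Real.exp (α * (r - s)) * ‖g r‖ ^ p) :=
            lintegral_iUnion_le _ _
        _ ≤ ∑' n : ℕ, c ^ n * M := by
            refine ENNReal.tsum_le_tsum fun n => ?_
            have step1 : (∫⁻ r in Set.Ioc (s - (n + 1) * h) (s - n * h),
                ENNReal.ofReal (Real.exp (α * (r - s)) * ‖g r‖ ^ p))
                ≤ ∫⁻ r in Set.Ioc (s - (n + 1) * h) (s - n * h),
                    c ^ n * ENNReal.ofReal (‖g r‖ ^ p) := by
              refine setLIntegral_mono' measurableSet_Ioc fun r hr => ?_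
              rw [ENNReal.ofReal_mul (Real.exp_nonneg _)]
              gcongr
              rw [hcdef, ← ENNReal.ofReal_pow (Real.exp_nonneg _), ← Real.exp_nat_mul]
              refine ENNReal.ofReal_le_ofReal (Real.exp_le_exp.mpr ?_)
              have : r ≤ s - n * h := hr.2
              nlinarith
            refine step1.trans ?_
            rw [lintegral_const_mul' _ _ (ENNReal.pow_ne_top ENNReal.ofReal_ne_top)]
            gcongr
            have hset : Set.Ioc (s - (n + 1) * h) (s - n * h)
                = Set.Ioc ((s - n * h) - h) (s - n * h) := by
              congr 1
              ring
            rw [hset, hMdef]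
            have hsn : s - n * h ∈ Set.Iic τ := by
              simp only [Set.mem_Iic] at hs ⊢
              nlinarith [Nat.cast_nonneg (α := ℝ) n]
            exact le_iSup₂_of_le (s - n * h) hsn le_rfl
        _ = (1 - c)⁻¹ * M := by
            rw [ENNReal.tsum_mul_right, ENNReal.tsum_geometric]
    refine lt_of_le_of_lt (iSup₂_le key) (ENNReal.mul_lt_top ?_ H)
    exact ENNReal.inv_lt_top.mpr (tsub_pos_of_lt hc1)
  · intro H
    have key : ∀ s ∈ Set.Iic τ,
        (∫⁻ r in Set.Ioc (s - h) s, ENNReal.ofReal (‖g r‖ ^ p))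
          ≤ ENNReal.ofReal (Real.exp (α * h)) * S := by
      intro s hs
      have step1 : (∫⁻ r in Set.Ioc (s - h) s, ENNReal.ofReal (‖g r‖ ^ p))
          ≤ ∫⁻ r in Set.Ioc (s - h) s,
              ENNReal.ofReal (Real.exp (α * h)) *
                ENNReal.ofReal (Real.exp (α * (r - s)) * ‖g r‖ ^ p) := by
        refine setLIntegral_mono' measurableSet_Ioc fun r hr => ?_
        rw [← ENNReal.ofReal_mul (Real.exp_nonneg _), ← mul_assoc, ← Real.exp_add]
        have hpow : (0:ℝ) ≤ ‖g r‖ ^ p := Real.rpow_nonneg (norm_nonneg _) p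
        refine ENNReal.ofReal_le_ofReal ?_
        have h1 : (1:ℝ) ≤ Real.exp (α * h + α * (r - s)) := by
          rw [← Real.exp_zero]
          refine Real.exp_le_exp.mpr ?_
          have := hr.1
          nlinarith
        nlinarith
      refine step1.trans ?_
      rw [lintegral_const_mul' _ _ (by finiteness)]
      gcongr
      refine le_trans (lintegral_mono_set (Set.Ioc_subset_Iic_self.trans (le_refl _))) ?_
      exact le_iSup₂_of_le s hs le_rfl
    refine lt_of_le_of_lt (iSup₂_le key) (ENNReal.mul_lt_top ENNReal.ofReal_lt_top H)
end
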